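/- arXiv:2003.02073 — 4 statements merged into one kernel-verified Lean document; each statement's English description precedes it below -/
import Mathlib

section
/- Let μ be a Borel probability measure on ℝ and ν a Borel measure on ℝ with ν({0}) = 0, ν((−∞,−1)) = 0 and ∫ min(1, y²) ν(dy) < ∞. Define S(z) = ∫_{[−1,z−1]} (z − 1 − y) ν(dy) for 0 ≤ z < 1, S(1) = 0, and S(z) = ∫_{[z−1,∞)∩[−1,1]} (y − z + 1) ν(dy) for z > 1. Then the function r(z) = 1_{z>0} ∫_{(0,∞)} x S(z/x) μ(dx) + 1_{z<0} ∫_{(−∞,0)} |x| S(z/x) μ(dx) is locally Lebesgue integrable on ℝ, i.e. ∫_K r(z) dz < ∞ for every compact set K ⊂ ℝ; equivalently, ρ(dz) = r(z) dz defines a locally finite Borel measure on ℝ. -/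
open MeasureTheory Set Filter

noncomputable section

namespace KEF

def IsLevyMeasure (ν : Measure ℝ) : Prop :=
  ν {0} = 0 ∧ ∫⁻ y, ENNReal.ofReal (min 1 (y ^ 2)) ∂ν < ⊤

/-- The generator `A` of the killed generalized OU process, expressed through the
Lévy triplets `(ση2, νη, γη)` of `η` and `(σU2, νU, γU)` of `Ũ`. -/
def levyGen (ση2 γη σU2 γU : ℝ) (νη νU : Measure ℝ) (f : ℝ → ℝ) (x : ℝ) : ℝ :=
  γη * deriv f x + ση2 / 2 * deriv (deriv f) x
    + (∫ y, (f (x + y) - f x - (if |y| ≤ 1 then y * deriv f x else 0)) ∂νη)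
    + γU * (x * deriv f x) + σU2 / 2 * (x ^ 2 * deriv (deriv f) x)
    + ∫ y in Ici (-1 : ℝ), (f (x + x * y) - f x - (if |y| ≤ 1 then x * y * deriv f x else 0)) ∂νU

/-- `μ` is invariant for the generator: `∫ Af dμ = 0` for all test functions `f`. -/
def Invariant (ση2 γη σU2 γU : ℝ) (νη νU : Measure ℝ) (μ : Measure ℝ) : Prop :=
  ∀ f : ℝ → ℝ, ContDiff ℝ (⊤ : ℕ∞) f → HasCompactSupport f →
    ∫ x, levyGen ση2 γη σU2 γU νη νU f x ∂μ = 0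

def Bmap (ν : Measure ℝ) (z : ℝ) : ℝ :=
  if 0 < z then (ν (Ioi (max z 1))).toReal
  else if z < 0 then -((ν (Iio (min z (-1)))).toReal)
  else 0

def BUmap (ν : Measure ℝ) (z : ℝ) : ℝ :=
  if 1 < z then (ν (Ioi (max (z - 1) 1))).toReal else 0

def Smap (ν : Measure ℝ) (z : ℝ) : ℝ :=
  if 0 < z then ∫ y in Ici z ∩ Icc (-1 : ℝ) 1, (y - z) ∂ν
  else if z < 0 then ∫ y in Iic z ∩ Icc (-1 : ℝ) 1, (z - y) ∂ν
  else 0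

def SUmap (ν : Measure ℝ) (z : ℝ) : ℝ :=
  if 0 ≤ z ∧ z < 1 then ∫ y in Icc (-1 : ℝ) (z - 1), (z - 1 - y) ∂ν
  else if 1 < z then ∫ y in Ici (z - 1) ∩ Icc (-1 : ℝ) 1, (y - z + 1) ∂ν
  else 0

/-- convolution of a function with a measure -/
def convM (g : ℝ → ℝ) (μ : Measure ℝ) (z : ℝ) : ℝ := ∫ x, g (z - x) ∂μ

def rmu (νU : Measure ℝ) (μ : Measure ℝ) (z : ℝ) : ℝ :=
  if 0 < z then ∫ x in Ioi (0 : ℝ), x * SUmap νU (z / x) ∂μ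
  else if z < 0 then ∫ x in Iio (0 : ℝ), |x| * SUmap νU (z / x) ∂μ
  else 0

def kmu (νU : Measure ℝ) (μ : Measure ℝ) (t : ℝ) : ℝ :=
  if 0 < t then ∫ x in Ioc (0 : ℝ) t, BUmap νU (t / x) ∂μ
  else if t < 0 then -∫ x in Ico t (0 : ℝ), BUmap νU (t / x) ∂μ
  else 0

def Dmu (γη γU : ℝ) (μ : Measure ℝ) (z : ℝ) : ℝ :=
  if 0 ≤ z then ∫ x in Ioc (0 : ℝ) z, (γη + x * γU) ∂μ
  else -∫ x in Ioc z (0 : ℝ), (γη + x * γU) ∂μ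

end KEF

open KEF
open scoped ENNReal

/-!
The function `S` is dominated by `g(w) = ∫_{[-1,1]} (|y| - |w - 1|)⁺ ν(dy)`, so the density `r`
is dominated by the multiplicative convolution `z ↦ ∫ |x| g(z/x) μ(dx)`. For `|y| ≤ 1` the tent
`w ↦ (|y| - |w - 1|)⁺` meets `[-t, t]` only when `|y| ≥ 1 - t`, and there its height and width
are at most `min |y| t`; hence, by Tonelli, `∫_{-t}^{t} g ≤ 8 t² ∫ min(1, y²) dν`. This bound is
scale invariant: `|x| ∫_{-M}^{M} g(z/x) dz = x² ∫_{-M/|x|}^{M/|x|} g ≤ 8 M² ∫ min(1, y²) dν`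
uniformly in `x`, and integrating in `μ(dx)` gives the claim.
-/

section

variable {α : Type*} [MeasurableSpace α]

theorem sigmaFinite_of_lintegral_lt_top {μ : Measure α} {f : α → ℝ≥0∞} (hf : Measurable f)
    (hint : ∫⁻ x, f x ∂μ < ∞) (hzero : μ {x | f x = 0} = 0) : SigmaFinite μ := by
  refine ⟨⟨⟨fun n => {x | ((n : ℝ≥0∞) + 1)⁻¹ ≤ f x} ∪ {x | f x = 0}, fun _ => trivial,
    fun n => ?_, ?_⟩⟩⟩
  · refine (measure_union_le _ _).trans_lt ?_
    rw [hzero, add_zero]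
    refine (meas_ge_le_lintegral_div hf.aemeasurable (by simp) (by simp)).trans_lt ?_
    exact ENNReal.div_lt_top hint.ne (by simp)
  · refine eq_univ_of_forall fun x => mem_iUnion.2 ?_
    by_cases hx : f x = 0
    · exact ⟨0, Or.inr hx⟩
    · obtain ⟨n, hn⟩ := ENNReal.exists_inv_nat_lt hx
      exact ⟨n, Or.inl (le_trans (ENNReal.inv_le_inv.2 le_self_add) hn.le)⟩

theorem ofReal_integral_le_lintegral_ofReal {μ : Measure α} {f : α → ℝ} (hf : 0 ≤ᵐ[μ] f) :
    ENNReal.ofReal (∫ x, f x ∂μ) ≤ ∫⁻ x, ENNReal.ofReal (f x) ∂μ :=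
  calc ENNReal.ofReal (∫ x, f x ∂μ) ≤ ‖∫ x, f x ∂μ‖ₑ := by
        rw [Real.enorm_eq_ofReal_abs]; exact ENNReal.ofReal_le_ofReal (le_abs_self _)
    _ ≤ ∫⁻ x, ‖f x‖ₑ ∂μ := enorm_integral_le_lintegral_enorm _
    _ = ∫⁻ x, ENNReal.ofReal (f x) ∂μ :=
        lintegral_congr_ae (hf.mono fun _ hx => Real.enorm_eq_ofReal hx)

end

theorem lintegral_comp_div (f : ℝ → ℝ≥0∞) {x : ℝ} (hx : x ≠ 0) :
    ∫⁻ z, f (z / x) = ENNReal.ofReal |x| * ∫⁻ w, f w := by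
  have h := lintegral_map_equiv f (Homeomorph.mulLeft₀ x⁻¹ (inv_ne_zero hx)).toMeasurableEquiv
    (μ := volume)
  simp only [Homeomorph.toMeasurableEquiv_coe, Homeomorph.coe_mulLeft₀] at h
  rw [Real.map_volume_mul_left (inv_ne_zero hx), inv_inv, lintegral_smul_measure, smul_eq_mul] at h
  simpa [div_eq_inv_mul] using h.symm

theorem lintegral_Icc_comp_div_le {f : ℝ → ℝ≥0∞} {C : ℝ≥0∞}
    (hf : ∀ t, 0 ≤ t → ∫⁻ w in Icc (-t) t, f w ≤ ENNReal.ofReal (t ^ 2) * C)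
    {M : ℝ} (hM : 0 ≤ M) (x : ℝ) :
    ENNReal.ofReal |x| * ∫⁻ z in Icc (-M) M, f (z / x) ≤ ENNReal.ofReal (M ^ 2) * C := by
  rcases eq_or_ne x 0 with rfl | hx
  · simp
  have hx' : 0 < |x| := abs_pos.2 hx
  have hIcc : ∀ z, (Icc (-M) M).indicator (fun z => f (z / x)) z
      = (Icc (-(M / |x|)) (M / |x|)).indicator f (z / x) := by
    intro z
    simp only [indicator, mem_Icc, ← abs_le, abs_div, div_le_div_iff_of_pos_right hx']
  calc ENNReal.ofReal |x| * ∫⁻ z in Icc (-M) M, f (z / x)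
      = ENNReal.ofReal |x| * (ENNReal.ofReal |x| * ∫⁻ w in Icc (-(M / |x|)) (M / |x|), f w) := by
        rw [← lintegral_indicator measurableSet_Icc, lintegral_congr hIcc,
          lintegral_comp_div _ hx, lintegral_indicator measurableSet_Icc]
    _ ≤ ENNReal.ofReal |x| * (ENNReal.ofReal |x| * (ENNReal.ofReal ((M / |x|) ^ 2) * C)) := by
        gcongr; exact hf _ (by positivity)
    _ = ENNReal.ofReal (M ^ 2) * C := by
        rw [← mul_assoc, ← mul_assoc, ← ENNReal.ofReal_mul hx'.le,
          ← ENNReal.ofReal_mul (by positivity)]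
        congr 2
        field_simp

theorem lintegral_Icc_lintegral_mul_comp_div_le {μ : Measure ℝ} [IsFiniteMeasure μ]
    {f : ℝ → ℝ≥0∞} (hf_meas : Measurable f) {C : ℝ≥0∞}
    (hf : ∀ t, 0 ≤ t → ∫⁻ w in Icc (-t) t, f w ≤ ENNReal.ofReal (t ^ 2) * C)
    {M : ℝ} (hM : 0 ≤ M) :
    ∫⁻ z in Icc (-M) M, ∫⁻ x, ENNReal.ofReal |x| * f (z / x) ∂μ
      ≤ ENNReal.ofReal (M ^ 2) * C * μ univ := by
  rw [lintegral_lintegral_swap (by fun_prop)]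
  calc ∫⁻ x, (∫⁻ z in Icc (-M) M, ENNReal.ofReal |x| * f (z / x)) ∂μ
      = ∫⁻ x, ENNReal.ofReal |x| * (∫⁻ z in Icc (-M) M, f (z / x)) ∂μ :=
        lintegral_congr fun x => lintegral_const_mul' _ _ ENNReal.ofReal_ne_top
    _ ≤ ∫⁻ _, ENNReal.ofReal (M ^ 2) * C ∂μ :=
        lintegral_mono fun x => lintegral_Icc_comp_div_le hf hM x
    _ = ENNReal.ofReal (M ^ 2) * C * μ univ := lintegral_const _

namespace KEF

/-- On the domain of integration of `SUmap ν w`, its integrand is `|y| - |w - 1|`. -/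
def tent (ν : Measure ℝ) (w : ℝ) : ℝ≥0∞ :=
  ∫⁻ y in Icc (-1) 1, ENNReal.ofReal (|y| - |w - 1|) ∂ν

theorem measurable_tent (ν : Measure ℝ) : Measurable (tent ν) := by
  have hanti : Antitone fun s : ℝ => ∫⁻ y in Icc (-1) 1, ENNReal.ofReal (|y| - s) ∂ν :=
    fun _ _ hst => lintegral_mono fun _ => ENNReal.ofReal_le_ofReal (by linarith)
  exact hanti.measurable.comp (measurable_id.sub_const 1).abs

theorem ofReal_setIntegral_le_tent (ν : Measure ℝ) {w : ℝ} {s : Set ℝ} (hs : MeasurableSet s)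
    (hs₁ : s ⊆ Icc (-1) 1) {f : ℝ → ℝ} (hf : ∀ y ∈ s, 0 ≤ f y ∧ f y ≤ |y| - |w - 1|) :
    ENNReal.ofReal (∫ y in s, f y ∂ν) ≤ tent ν w :=
  calc ENNReal.ofReal (∫ y in s, f y ∂ν)
      ≤ ∫⁻ y in s, ENNReal.ofReal (f y) ∂ν :=
        ofReal_integral_le_lintegral_ofReal
          ((ae_restrict_iff' hs).2 (ae_of_all _ fun y hy => (hf y hy).1))
    _ ≤ ∫⁻ y in s, ENNReal.ofReal (|y| - |w - 1|) ∂ν :=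
        setLIntegral_mono' hs fun y hy => ENNReal.ofReal_le_ofReal (hf y hy).2
    _ ≤ tent ν w := lintegral_mono_set hs₁

theorem ofReal_SUmap_le_tent (ν : Measure ℝ) (w : ℝ) :
    ENNReal.ofReal (SUmap ν w) ≤ tent ν w := by
  unfold SUmap
  split_ifs with hw hw'
  · refine ofReal_setIntegral_le_tent ν measurableSet_Icc (Icc_subset_Icc_right (by linarith))
      fun y hy => ?_
    rw [abs_of_neg (by linarith [hy.2]), abs_of_neg (by linarith)]
    constructor <;> linarith [hy.2]
  · refine ofReal_setIntegral_le_tent ν (measurableSet_Ici.inter measurableSet_Icc)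
      inter_subset_right fun y hy => ?_
    have hy' : w - 1 ≤ y := hy.1
    rw [abs_of_pos (by linarith), abs_of_pos (by linarith)]
    constructor <;> linarith
  · simp


theorem lintegral_Icc_ofReal_abs_sub_abs_le {y t : ℝ} (hy : |y| ≤ 1) (ht : 0 ≤ t) :
    ∫⁻ w in Icc (-t) t, ENNReal.ofReal (|y| - |w - 1|)
      ≤ ENNReal.ofReal (t ^ 2) * (8 * ENNReal.ofReal (min 1 (y ^ 2))) := by
  have hw₁ : ∀ w : ℝ, 1 - w ≤ |w - 1| := fun w => by rw [abs_sub_comm]; exact le_abs_self _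
  rcases lt_or_ge (|y| + t) 1 with hsmall | hlarge
  · calc ∫⁻ w in Icc (-t) t, ENNReal.ofReal (|y| - |w - 1|) = ∫⁻ _ in Icc (-t) t, 0 :=
          setLIntegral_congr_fun measurableSet_Icc fun w hw =>
            ENNReal.ofReal_eq_zero.2 (by linarith [hw₁ w, hw.2])
      _ ≤ _ := by simp
  set m := min |y| t
  have hm : 0 ≤ m := le_min (abs_nonneg y) ht
  have hy2 : min 1 (y ^ 2) = |y| ^ 2 := by
    rw [sq_abs, min_eq_right (by nlinarith [sq_abs y, abs_nonneg y])]
  calc ∫⁻ w in Icc (-t) t, ENNReal.ofReal (|y| - |w - 1|)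
      ≤ ∫⁻ w in Icc (-t) t,
          (Ioo (1 - |y|) (1 + |y|)).indicator (fun _ => ENNReal.ofReal m) w := by
        refine setLIntegral_mono (measurable_const.indicator measurableSet_Ioo) fun w hw => ?_
        by_cases hwy : w ∈ Ioo (1 - |y|) (1 + |y|)
        · rw [indicator_of_mem hwy]
          exact ENNReal.ofReal_le_ofReal (le_min (by linarith [abs_nonneg (w - 1)])
            (by linarith [hw₁ w, hw.2]))
        · rw [indicator_of_notMem hwy, nonpos_iff_eq_zero, ENNReal.ofReal_eq_zero]
          rw [mem_Ioo, ← sub_lt_iff_lt_add', sub_lt_comm, ← abs_sub_lt_iff, abs_sub_comm] at hwy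
          linarith
    _ = ENNReal.ofReal m * volume (Ioo (1 - |y|) (1 + |y|) ∩ Icc (-t) t) := by
        rw [lintegral_indicator_const measurableSet_Ioo, Measure.restrict_apply measurableSet_Ioo]
    _ ≤ ENNReal.ofReal m * ENNReal.ofReal (2 * m) := by
        gcongr
        rw [mul_min_of_nonneg _ _ zero_le_two, ENNReal.ofReal_min]
        refine le_min ((measure_mono inter_subset_left).trans_eq ?_)
          ((measure_mono inter_subset_right).trans_eq ?_) <;>
          simp only [Real.volume_Ioo, Real.volume_Icc] <;> ring_nf
    _ ≤ ENNReal.ofReal (8 * t ^ 2 * |y| ^ 2) := by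
        rw [← ENNReal.ofReal_mul hm]
        refine ENNReal.ofReal_le_ofReal ?_
        rcases le_total (1 / 2) |y| with hy' | hy'
        · have hmt : m ^ 2 ≤ t ^ 2 := pow_le_pow_left₀ hm (min_le_right _ _) 2
          have hy4 : 1 ≤ 4 * |y| ^ 2 := by nlinarith
          nlinarith [mul_le_mul_of_nonneg_left hy4 (sq_nonneg t)]
        · have hmy : m ^ 2 ≤ |y| ^ 2 := pow_le_pow_left₀ hm (min_le_left _ _) 2
          have ht4 : 1 ≤ 4 * t ^ 2 := by nlinarith
          nlinarith [mul_le_mul_of_nonneg_left ht4 (sq_nonneg |y|)]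
    _ = ENNReal.ofReal (t ^ 2) * (8 * ENNReal.ofReal (min 1 (y ^ 2))) := by
        rw [hy2, ← ENNReal.ofReal_ofNat 8, ← ENNReal.ofReal_mul (by norm_num),
          ← ENNReal.ofReal_mul (by positivity)]
        ring_nf

theorem lintegral_Icc_tent_le (ν : Measure ℝ) [SFinite ν] {t : ℝ} (ht : 0 ≤ t) :
    ∫⁻ w in Icc (-t) t, tent ν w
      ≤ ENNReal.ofReal (t ^ 2) * (8 * ∫⁻ y, ENNReal.ofReal (min 1 (y ^ 2)) ∂ν) := by
  unfold tent
  rw [lintegral_lintegral_swap (by fun_prop)]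
  calc ∫⁻ y in Icc (-1) 1, (∫⁻ w in Icc (-t) t, ENNReal.ofReal (|y| - |w - 1|)) ∂ν
      ≤ ∫⁻ y in Icc (-1) 1, ENNReal.ofReal (t ^ 2) * (8 * ENNReal.ofReal (min 1 (y ^ 2))) ∂ν :=
        setLIntegral_mono' measurableSet_Icc fun y hy =>
          lintegral_Icc_ofReal_abs_sub_abs_le (abs_le.2 hy) ht
    _ ≤ ∫⁻ y, ENNReal.ofReal (t ^ 2) * (8 * ENNReal.ofReal (min 1 (y ^ 2))) ∂ν :=
        setLIntegral_le_lintegral _ _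
    _ = ENNReal.ofReal (t ^ 2) * (8 * ∫⁻ y, ENNReal.ofReal (min 1 (y ^ 2)) ∂ν) := by
        rw [lintegral_const_mul' _ _ ENNReal.ofReal_ne_top, lintegral_const_mul' _ _ (by simp)]


theorem ofReal_abs_mul_SUmap_le (ν : Measure ℝ) (x w : ℝ) :
    ENNReal.ofReal (|x| * SUmap ν w) ≤ ENNReal.ofReal |x| * tent ν w := by
  rw [ENNReal.ofReal_mul (abs_nonneg x)]
  gcongr
  exact ofReal_SUmap_le_tent ν w

theorem rDensity_le_lintegral_tent (μ ν : Measure ℝ) (z : ℝ) :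
    (if 0 < z then ∫⁻ x in Ioi (0 : ℝ), ENNReal.ofReal (x * SUmap ν (z / x)) ∂μ else 0)
        + (if z < 0 then ∫⁻ x in Iio (0 : ℝ), ENNReal.ofReal (|x| * SUmap ν (z / x)) ∂μ else 0)
      ≤ ∫⁻ x, ENNReal.ofReal |x| * tent ν (z / x) ∂μ := by
  split_ifs with hpos hneg hneg
  · linarith
  · rw [add_zero]
    refine le_trans (setLIntegral_mono' measurableSet_Ioi fun x hx => ?_)
      (setLIntegral_le_lintegral _ _)
    simpa only [abs_of_pos (mem_Ioi.1 hx)] using ofReal_abs_mul_SUmap_le ν x (z / x)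
  · rw [zero_add]
    exact le_trans (lintegral_mono fun x => ofReal_abs_mul_SUmap_le ν x _)
      (setLIntegral_le_lintegral _ _)
  · simp

end KEF

theorem stmt1_general (μ : Measure ℝ) [IsProbabilityMeasure μ] (ν : Measure ℝ)
    (hν0 : ν {0} = 0)
    (hνint : ∫⁻ y, ENNReal.ofReal (min 1 (y ^ 2)) ∂ν < ⊤) :
    ∀ K : Set ℝ, IsCompact K →
      (∫⁻ z in K,
        ((if 0 < z then ∫⁻ x in Ioi (0 : ℝ), ENNReal.ofReal (x * SUmap ν (z / x)) ∂μ else 0)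
          + (if z < 0 then ∫⁻ x in Iio (0 : ℝ), ENNReal.ofReal (|x| * SUmap ν (z / x)) ∂μ else 0))
        ∂volume) < ⊤ := by
  intro K hK
  have : SigmaFinite ν := sigmaFinite_of_lintegral_lt_top (by fun_prop) hνint (by
    convert hν0 using 2
    ext y
    simp)
  obtain ⟨M, hM, hKM⟩ := hK.isBounded.subset_closedBall_lt 0 0
  rw [Real.closedBall_eq_Icc, zero_sub, zero_add] at hKM
  calc _ ≤ ∫⁻ z in Icc (-M) M, ∫⁻ x, ENNReal.ofReal |x| * tent ν (z / x) ∂μ :=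
        (lintegral_mono_set hKM).trans (lintegral_mono (rDensity_le_lintegral_tent μ ν))
    _ ≤ ENNReal.ofReal (M ^ 2) * (8 * ∫⁻ y, ENNReal.ofReal (min 1 (y ^ 2)) ∂ν) * μ univ :=
        lintegral_Icc_lintegral_mul_comp_div_le (measurable_tent ν)
          (fun _ ht => lintegral_Icc_tent_le ν ht) hM.le
    _ < ⊤ := by
        rw [measure_univ, mul_one]
        exact ENNReal.mul_lt_top ENNReal.ofReal_lt_top (ENNReal.mul_lt_top (by simp) hνint)

theorem stmt1 (μ : Measure ℝ) [IsProbabilityMeasure μ] (ν : Measure ℝ)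
    (hν0 : ν {0} = 0) (hνconc : ν (Iio (-1 : ℝ)) = 0)
    (hνint : ∫⁻ y, ENNReal.ofReal (min 1 (y ^ 2)) ∂ν < ⊤) :
    ∀ K : Set ℝ, IsCompact K →
      (∫⁻ z in K,
        ((if 0 < z then ∫⁻ x in Ioi (0 : ℝ), ENNReal.ofReal (x * SUmap ν (z / x)) ∂μ else 0)
          + (if z < 0 then ∫⁻ x in Iio (0 : ℝ), ENNReal.ofReal (|x| * SUmap ν (z / x)) ∂μ else 0))
        ∂volume) < ⊤ :=
  stmt1_general μ ν hν0 hνint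
end
end

section
/- Let (σ_η², ν_η, γ_η) and (σ_Ũ², ν_Ũ, γ_Ũ) be Lévy triplets with ν_Ũ concentrated on [−1,∞), and let μ be any Borel probability measure on ℝ. Then for every f ∈ C_c^∞(ℝ), all integrals below are absolutely convergent and ∫_ℝ (Af)(x) μ(dx) = ∫_ℝ f''(z) (σ_η²/2 + z² σ_Ũ²/2) μ(dz) + ∫_ℝ f''(z) [ (S_η∗μ)(z) + r_μ(z) ] dz + ∫_ℝ f'(z) (γ_η + z γ_Ũ) μ(dz) + ∫_ℝ f'(z) (B_η∗μ)(z) dz + ∫_ℝ f'(z) κ_μ(z) dz. -/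
open MeasureTheory Set Filter

noncomputable section

open KEF

/-!
Taylor's formula with integral remainder writes each compensated jump increment of `f` as an
integral over the landing point `z`: of `f''` against the Peano kernel of the jump (small jumps),
or of `f'` against the signed indicator of the jumped-over interval (large jumps). Integrated
against `|f''|` and `|f'|`, these kernels are `O(min 1 y²)` in the jump mark `y`. For the jumps
`x ↦ x + x y` of `Ũ`, which are unbounded in `x`, this uses that a jump starting far from the
support of `f''` only reaches it when `y ≤ -1/2`. Hence Fubini's theorem moves the `μ ⊗ ν`
integration onto the kernels. Integrating the kernels in `y` produces `S_η` and `B_η`; for `Ũ`,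
the scaling `k(x h, x u) = |x| k(h, u)` (resp. `sign x • k(h, u)`) turns them into `S_Ũ` and `B_Ũ`
at `z / x`, and integrating in `x` produces `r_μ` and `κ_μ`. The exceptional points `x = z` and
`z = 0` are null in `z`, since `μ` has only countably many atoms.
-/

open scoped Interval

namespace KEF

namespace IsLevyMeasure

variable {ν : Measure ℝ}

lemma integrable_min_one_sq (hν : IsLevyMeasure ν) : Integrable (fun y => min 1 (y ^ 2)) ν := by
  refine ⟨by fun_prop, ?_⟩
  rw [hasFiniteIntegral_iff_ofReal (.of_forall fun y => le_min zero_le_one (sq_nonneg y))]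
  exact hν.2

lemma sigmaFinite (hν : IsLevyMeasure ν) : SigmaFinite ν := by
  refine ⟨⟨⟨fun n => {0} ∪ {y | (n + 1 : ℝ)⁻¹ ≤ ‖min 1 (y ^ 2)‖}, fun _ => trivial,
    fun n => ?_, ?_⟩⟩⟩
  · refine (measure_union_le _ _).trans_lt ?_
    rw [hν.1, zero_add]
    exact hν.integrable_min_one_sq.measure_norm_ge_lt_top (by positivity)
  · refine eq_univ_of_forall fun y => mem_iUnion.2 ?_
    rcases eq_or_ne y 0 with rfl | hy
    · exact ⟨0, Or.inl rfl⟩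
    · have hpos : 0 < ‖min 1 (y ^ 2)‖ := norm_pos_iff.2 (lt_min one_pos (by positivity)).ne'
      obtain ⟨n, hn⟩ := exists_nat_one_div_lt hpos
      exact ⟨n, Or.inr (by simpa using hn.le)⟩

end IsLevyMeasure

lemma integrable_prod_of_integral_abs_le {α β : Type*} [MeasurableSpace α] [MeasurableSpace β]
    {μ : Measure α} {ν : Measure β} [SFinite ν] {K : α × β → ℝ} (hK : Measurable K)
    (hslice : ∀ a, Integrable (fun b => K (a, b)) ν) {φ : α → ℝ} (hφ : Integrable φ μ)
    (hbound : ∀ a, ∫ b, |K (a, b)| ∂ν ≤ φ a) : Integrable K (μ.prod ν) := by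
  refine (integrable_prod_iff hK.aestronglyMeasurable).2 ⟨.of_forall hslice, ?_⟩
  refine hφ.mono' hK.aestronglyMeasurable.norm.integral_prod_right' (.of_forall fun a => ?_)
  rw [Real.norm_eq_abs, abs_of_nonneg (integral_nonneg fun b => norm_nonneg _)]
  exact hbound a

lemma integral_prod_const_mul_eq {α β : Type*} [MeasurableSpace α] [MeasurableSpace β]
    {μ : Measure α} {ν : Measure β} [SFinite μ] [SFinite ν] {w : α × β → ℝ} {v : α → ℝ} (c : ℝ)
    (hw : Integrable (fun p => c * w p) (μ.prod ν))
    (hv : ∀ᵐ x ∂μ, ∫ y, w (x, y) ∂ν = v x) :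
    ∫ p, c * w p ∂(μ.prod ν) = c * ∫ x, v x ∂μ := by
  rw [integral_prod _ hw, ← integral_const_mul]
  exact integral_congr_ae (hv.mono fun x hx => by simp only [integral_const_mul, hx])

lemma ae_forall_ae_ne (μ : Measure ℝ) [SFinite μ] : ∀ᵐ z ∂(volume : Measure ℝ), ∀ᵐ x ∂μ, x ≠ z := by
  have hatoms : {z : ℝ | 0 < μ {x | x = z}}.Countable :=
    Measure.countable_meas_level_set_pos measurable_id
  filter_upwards [hatoms.ae_notMem volume] with z hz
  simpa [ae_iff] using hz

lemma exists_abs_le_of_hasCompactSupport {g : ℝ → ℝ} (hg : Continuous g)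
    (hs : HasCompactSupport g) : ∃ M, ∀ z, |g z| ≤ M := by
  simpa [Real.norm_eq_abs] using hs.exists_bound_of_continuous hg

lemma min_one_sq_of_abs_le_one {y : ℝ} (hy : |y| ≤ 1) : min 1 (y ^ 2) = y ^ 2 :=
  min_eq_right (by nlinarith [sq_abs y, abs_nonneg y])

def taylorKernel (h u : ℝ) : ℝ :=
  if 0 < u ∧ u ≤ h then h - u else if h < u ∧ u ≤ 0 then u - h else 0

def incrementKernel (h u : ℝ) : ℝ :=
  if 0 < u ∧ u < h then 1 else if h < u ∧ u < 0 then -1 else 0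

lemma measurable_taylorKernel : Measurable fun p : ℝ × ℝ => taylorKernel p.1 p.2 := by
  unfold taylorKernel
  refine Measurable.ite ?_ (by fun_prop) (Measurable.ite ?_ (by fun_prop) measurable_const)
  · exact (measurableSet_lt measurable_const measurable_snd).inter
      (measurableSet_le measurable_snd measurable_fst)
  · exact (measurableSet_lt measurable_fst measurable_snd).inter
      (measurableSet_le measurable_snd measurable_const)

lemma measurable_incrementKernel : Measurable fun p : ℝ × ℝ => incrementKernel p.1 p.2 := by
  unfold incrementKernel
  refine Measurable.ite ?_ measurable_const (Measurable.ite ?_ measurable_const measurable_const)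
  · exact (measurableSet_lt measurable_const measurable_snd).inter
      (measurableSet_lt measurable_snd measurable_fst)
  · exact (measurableSet_lt measurable_fst measurable_snd).inter
      (measurableSet_lt measurable_snd measurable_const)

lemma taylorKernel_nonneg (h u : ℝ) : 0 ≤ taylorKernel h u := by
  unfold taylorKernel; split_ifs <;> linarith

lemma taylorKernel_le_abs (h u : ℝ) : taylorKernel h u ≤ |h| := by
  unfold taylorKernel; split_ifs <;> cases abs_cases h <;> linarith

lemma abs_incrementKernel_le (h u : ℝ) : |incrementKernel h u| ≤ 1 := by
  unfold incrementKernel; split_ifs <;> simp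

lemma taylorKernel_zero_left (u : ℝ) : taylorKernel 0 u = 0 := by
  unfold taylorKernel; split_ifs <;> first | rfl | (exfalso; grind)

lemma incrementKernel_zero_left (u : ℝ) : incrementKernel 0 u = 0 := by
  unfold incrementKernel; split_ifs <;> first | rfl | (exfalso; grind)

lemma taylorKernel_neg_neg (h : ℝ) {u : ℝ} (hu : u ≠ 0) :
    taylorKernel (-h) (-u) = taylorKernel h u := by
  unfold taylorKernel
  split_ifs <;> grind

lemma incrementKernel_neg_neg (h u : ℝ) : incrementKernel (-h) (-u) = -incrementKernel h u := by
  unfold incrementKernel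
  split_ifs <;> grind

section PositiveScaling

variable {c : ℝ} (hc : 0 < c)
include hc

private lemma mul_nonpos_iff_of_pos (a : ℝ) : c * a ≤ 0 ↔ a ≤ 0 := by
  simpa using mul_le_mul_iff_right₀ hc (b := a) (c := 0)

private lemma mul_neg_iff_of_pos (a : ℝ) : c * a < 0 ↔ a < 0 := by
  simpa using mul_lt_mul_iff_right₀ hc (b := a) (c := 0)

lemma taylorKernel_mul_mul_of_pos (h u : ℝ) :
    taylorKernel (c * h) (c * u) = c * taylorKernel h u := by
  simp only [taylorKernel, hc, mul_pos_iff_of_pos_left, mul_le_mul_iff_right₀,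
    mul_lt_mul_iff_right₀, mul_nonpos_iff_of_pos hc]
  split_ifs <;> ring

lemma incrementKernel_mul_mul_of_pos (h u : ℝ) :
    incrementKernel (c * h) (c * u) = incrementKernel h u := by
  simp only [incrementKernel, hc, mul_pos_iff_of_pos_left, mul_lt_mul_iff_right₀,
    mul_neg_iff_of_pos hc]

end PositiveScaling

lemma taylorKernel_mul_mul (c h : ℝ) {u : ℝ} (hu : u ≠ 0) :
    taylorKernel (c * h) (c * u) = |c| * taylorKernel h u := by
  rcases lt_trichotomy c 0 with hc | rfl | hc
  · rw [show c * h = -c * -h by ring, show c * u = -c * -u by ring,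
      taylorKernel_mul_mul_of_pos (neg_pos.2 hc), taylorKernel_neg_neg h hu, abs_of_neg hc]
  · simp [taylorKernel_zero_left]
  · rw [abs_of_pos hc, taylorKernel_mul_mul_of_pos hc]

lemma incrementKernel_mul_mul (c h u : ℝ) :
    incrementKernel (c * h) (c * u) = Real.sign c * incrementKernel h u := by
  rcases lt_trichotomy c 0 with hc | rfl | hc
  · rw [show c * h = -c * -h by ring, show c * u = -c * -u by ring,
      incrementKernel_mul_mul_of_pos (neg_pos.2 hc), incrementKernel_neg_neg, Real.sign_of_neg hc,
      neg_one_mul]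
  · simp [incrementKernel_zero_left]
  · rw [Real.sign_of_pos hc, one_mul, incrementKernel_mul_mul_of_pos hc]

lemma taylorKernel_sub_eq_indicator (x h z : ℝ) :
    taylorKernel h (z - x) = (Ι x (x + h)).indicator (fun z => |x + h - z|) z := by
  classical
  rw [indicator_apply, mem_uIoc, taylorKernel]
  split_ifs <;> grind [abs_of_nonneg, abs_of_nonpos]

lemma integrable_taylorKernel_sub (x h : ℝ) : Integrable fun z => taylorKernel h (z - x) := by
  simp_rw [taylorKernel_sub_eq_indicator]
  exact (Continuous.integrableOn_uIoc (by fun_prop)).integrable_indicator measurableSet_uIoc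

lemma integral_mul_taylorKernel_sub (g : ℝ → ℝ) (x h : ℝ) :
    ∫ z, g z * taylorKernel h (z - x) = ∫ z in x..x + h, (x + h - z) * g z := by
  rcases le_or_gt 0 h with hh | hh
  · rw [intervalIntegral.integral_of_le (by linarith), ← integral_indicator measurableSet_Ioc]
    congr 1 with z
    simp only [taylorKernel, indicator_apply, mem_Ioc]
    split_ifs <;> grind
  · rw [intervalIntegral.integral_of_ge (by linarith), ← integral_neg,
      ← integral_indicator measurableSet_Ioc]
    congr 1 with z
    simp only [taylorKernel, indicator_apply, mem_Ioc]
    split_ifs <;> grind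

lemma integral_mul_incrementKernel_sub (g : ℝ → ℝ) (x h : ℝ) :
    ∫ z, g z * incrementKernel h (z - x) = ∫ z in x..x + h, g z := by
  rcases le_or_gt 0 h with hh | hh
  · rw [intervalIntegral.integral_of_le (by linarith), integral_Ioc_eq_integral_Ioo,
      ← integral_indicator measurableSet_Ioo]
    congr 1 with z
    simp only [incrementKernel, indicator_apply, mem_Ioo]
    split_ifs <;> grind
  · rw [intervalIntegral.integral_of_ge (by linarith), integral_Ioc_eq_integral_Ioo, ← integral_neg,
      ← integral_indicator measurableSet_Ioo]
    congr 1 with z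
    simp only [incrementKernel, indicator_apply, mem_Ioo]
    split_ifs <;> grind

lemma integral_taylorKernel_sub (x h : ℝ) : ∫ z, taylorKernel h (z - x) = h ^ 2 / 2 := by
  have h1 := integral_mul_taylorKernel_sub 1 x h
  simp only [Pi.one_apply, one_mul, mul_one] at h1
  rw [h1, intervalIntegral.integral_comp_sub_left (fun z => z), integral_id]
  ring

section Taylor

variable {f : ℝ → ℝ}

lemma sub_eq_integral_mul_incrementKernel (hf : ContDiff ℝ 1 f) (x h : ℝ) :
    f (x + h) - f x = ∫ z, deriv f z * incrementKernel h (z - x) := by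
  rw [integral_mul_incrementKernel_sub, intervalIntegral.integral_deriv_eq_sub
    (fun w _ => hf.differentiable one_ne_zero w)
    ((hf.continuous_deriv le_rfl).intervalIntegrable _ _)]

lemma taylor_remainder_eq_integral (hf : ContDiff ℝ 2 f) (x h : ℝ) :
    f (x + h) - f x - h * deriv f x = ∫ z, deriv (deriv f) z * taylorKernel h (z - x) := by
  have hf' : ContDiff ℝ 1 (deriv f) := hf.deriv'
  have hparts := intervalIntegral.integral_mul_deriv_eq_deriv_mul
    (u := fun w => x + h - w) (u' := fun _ => -1) (a := x) (b := x + h)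
    (fun w _ => by simpa using (hasDerivAt_id w).const_sub (x + h))
    (fun w _ => (hf'.differentiable one_ne_zero w).hasDerivAt)
    intervalIntegrable_const ((hf'.continuous_deriv le_rfl).intervalIntegrable _ _)
  have hftc := sub_eq_integral_mul_incrementKernel (hf.of_le one_le_two) x h
  rw [integral_mul_incrementKernel_sub] at hftc
  rw [integral_mul_taylorKernel_sub, hparts]
  simp only [neg_one_mul, intervalIntegral.integral_neg, ← hftc]
  ring

end Taylor

section KernelIntegrals

variable (ν : Measure ℝ)

lemma integral_taylorKernel_eq_Smap {u : ℝ} (hu : u ≠ 0) :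
    ∫ y, (if |y| ≤ 1 then taylorKernel y u else 0) ∂ν = Smap ν u := by
  rcases hu.lt_or_gt with hu | hu
  · rw [Smap, if_neg hu.not_gt, if_pos hu,
      ← integral_indicator (measurableSet_Iic.inter measurableSet_Icc)]
    congr 1 with y
    simp only [indicator_apply, mem_inter_iff, mem_Iic, mem_Icc, abs_le, taylorKernel]
    split_ifs <;> grind
  · rw [Smap, if_pos hu, ← integral_indicator (measurableSet_Ici.inter measurableSet_Icc)]
    congr 1 with y
    simp only [indicator_apply, mem_inter_iff, mem_Ici, mem_Icc, abs_le, taylorKernel]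
    split_ifs <;> grind

lemma integral_incrementKernel_eq_Bmap (u : ℝ) :
    ∫ y, (if |y| ≤ 1 then 0 else incrementKernel y u) ∂ν = Bmap ν u := by
  rcases lt_trichotomy u 0 with hu | rfl | hu
  · rw [Bmap, if_neg hu.not_gt, if_pos hu, ← measureReal_def,
      ← integral_indicator_one measurableSet_Iio, ← integral_neg]
    congr 1 with y
    simp only [indicator_apply, mem_Iio, lt_min_iff, Pi.one_apply, abs_le, incrementKernel]
    split_ifs <;> grind
  · simp [Bmap, incrementKernel]
  · rw [Bmap, if_pos hu, ← measureReal_def, ← integral_indicator_one measurableSet_Ioi]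
    congr 1 with y
    simp only [indicator_apply, mem_Ioi, max_lt_iff, Pi.one_apply, abs_le, incrementKernel]
    split_ifs <;> grind

lemma setIntegral_taylorKernel_eq_SUmap {w : ℝ} (hw : w ≠ 1) :
    ∫ y in Ici (-1), (if |y| ≤ 1 then taylorKernel y (w - 1) else 0) ∂ν = SUmap ν w := by
  rw [SUmap, ← integral_indicator measurableSet_Ici]
  split_ifs with h₁ h₂
  · rw [← integral_indicator measurableSet_Icc]
    congr 1 with y
    simp only [indicator_apply, mem_Ici, mem_Icc, abs_le, taylorKernel]
    split_ifs <;> grind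
  · rw [← integral_indicator (measurableSet_Ici.inter measurableSet_Icc)]
    congr 1 with y
    simp only [indicator_apply, mem_inter_iff, mem_Ici, mem_Icc, abs_le, taylorKernel]
    split_ifs <;> grind
  · refine integral_eq_zero_of_ae (.of_forall fun y => ?_)
    simp only [Pi.zero_apply, indicator_apply, mem_Ici, abs_le, taylorKernel]
    split_ifs <;> grind

lemma setIntegral_incrementKernel_eq_BUmap (w : ℝ) :
    ∫ y in Ici (-1), (if |y| ≤ 1 then 0 else incrementKernel y (w - 1)) ∂ν = BUmap ν w := by
  rw [BUmap, ← integral_indicator measurableSet_Ici]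
  split_ifs with hw
  · rw [← measureReal_def, ← integral_indicator_one measurableSet_Ioi]
    congr 1 with y
    simp only [indicator_apply, mem_Ici, mem_Ioi, max_lt_iff, Pi.one_apply, abs_le,
      incrementKernel]
    split_ifs <;> grind
  · refine integral_eq_zero_of_ae (.of_forall fun y => ?_)
    simp only [Pi.zero_apply, indicator_apply, mem_Ici, abs_le, incrementKernel]
    split_ifs <;> grind

lemma setIntegral_taylorKernel_mul_eq {x z : ℝ} (hxz : z ≠ x) :
    ∫ y in Ici (-1), (if |y| ≤ 1 then taylorKernel (x * y) (z - x) else 0) ∂ν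
      = |x| * SUmap ν (z / x) := by
  rcases eq_or_ne x 0 with rfl | hx
  · simp [taylorKernel_zero_left]
  have hw : z / x ≠ 1 := fun h => hxz (by rwa [div_eq_one_iff_eq hx] at h)
  have hzx : z - x = x * (z / x - 1) := by field_simp
  have hscale : ∀ y, (if |y| ≤ 1 then taylorKernel (x * y) (z - x) else 0)
      = |x| * if |y| ≤ 1 then taylorKernel y (z / x - 1) else 0 := fun y => by
    rw [hzx, taylorKernel_mul_mul x y (sub_ne_zero.2 hw), mul_ite, mul_zero]
  simp_rw [hscale, integral_const_mul, setIntegral_taylorKernel_eq_SUmap ν hw]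

lemma setIntegral_incrementKernel_mul_eq (x z : ℝ) :
    ∫ y in Ici (-1), (if |y| ≤ 1 then 0 else incrementKernel (x * y) (z - x)) ∂ν
      = Real.sign x * BUmap ν (z / x) := by
  rcases eq_or_ne x 0 with rfl | hx
  · simp [incrementKernel_zero_left]
  have hzx : z - x = x * (z / x - 1) := by field_simp
  have hscale : ∀ y, (if |y| ≤ 1 then 0 else incrementKernel (x * y) (z - x))
      = Real.sign x * if |y| ≤ 1 then 0 else incrementKernel y (z / x - 1) := fun y => by
    rw [hzx, incrementKernel_mul_mul, mul_ite, mul_zero]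
  simp_rw [hscale, integral_const_mul, setIntegral_incrementKernel_eq_BUmap]

lemma SUmap_of_neg {w : ℝ} (hw : w < 0) : SUmap ν w = 0 := by
  rw [SUmap, if_neg (by grind), if_neg (by grind)]

lemma BUmap_of_le_one {w : ℝ} (hw : w ≤ 1) : BUmap ν w = 0 := by
  rw [BUmap, if_neg hw.not_gt]

variable (μ : Measure ℝ)

lemma rmu_eq_integral {z : ℝ} (hz : z ≠ 0) : rmu ν μ z = ∫ x, |x| * SUmap ν (z / x) ∂μ := by
  rcases hz.lt_or_gt with hz | hz
  · rw [rmu, if_neg hz.not_gt, if_pos hz, ← integral_indicator measurableSet_Iio]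
    congr 1 with x
    rcases lt_trichotomy x 0 with hx | rfl | hx
    · simp [hx]
    · simp
    · simp [hx.not_gt, SUmap_of_neg ν (div_neg_of_neg_of_pos hz hx)]
  · rw [rmu, if_pos hz, ← integral_indicator measurableSet_Ioi]
    congr 1 with x
    rcases lt_trichotomy x 0 with hx | rfl | hx
    · simp [hx.not_gt, SUmap_of_neg ν (div_neg_of_pos_of_neg hz hx)]
    · simp
    · simp [hx, abs_of_pos hx]

lemma kmu_eq_integral (z : ℝ) : kmu ν μ z = ∫ x, Real.sign x * BUmap ν (z / x) ∂μ := by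
  rcases lt_trichotomy z 0 with hz | rfl | hz
  · rw [kmu, if_neg hz.not_gt, if_pos hz, ← integral_indicator measurableSet_Ico, ← integral_neg]
    congr 1 with x
    rcases lt_or_ge x z with hxz | hzx
    · have hx : x < 0 := hxz.trans hz
      simp [hxz.not_ge, Real.sign_of_neg hx,
        BUmap_of_le_one ν ((div_le_one_of_neg hx).2 hxz.le)]
    rcases lt_or_ge x 0 with hx | hx
    · simp [hzx, hx, Real.sign_of_neg hx]
    rcases hx.eq_or_lt with rfl | hx
    · simp
    · simp [hx.not_gt, BUmap_of_le_one ν ((div_neg_of_neg_of_pos hz hx).le.trans zero_le_one)]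
  · simp [kmu, BUmap_of_le_one ν zero_le_one]
  · rw [kmu, if_pos hz, ← integral_indicator measurableSet_Ioc]
    congr 1 with x
    rcases le_or_gt x 0 with hx | hx
    · rcases hx.eq_or_lt with rfl | hx
      · simp
      · simp [hx.not_gt, BUmap_of_le_one ν ((div_neg_of_pos_of_neg hz hx).le.trans zero_le_one)]
    rcases le_or_gt x z with hxz | hzx
    · simp [hx, hxz, Real.sign_of_pos hx]
    · simp [hzx.not_ge, BUmap_of_le_one ν ((div_le_one hx).2 hzx.le)]

end KernelIntegrals

section KernelBounds

variable {g : ℝ → ℝ} {M R : ℝ}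

lemma integral_abs_mul_taylorKernel_sub_le (hM : ∀ z, |g z| ≤ M) (x h : ℝ) :
    ∫ z, |g z * taylorKernel h (z - x)| ≤ M * (h ^ 2 / 2) := by
  calc ∫ z, |g z * taylorKernel h (z - x)| ≤ ∫ z, M * taylorKernel h (z - x) := by
        refine integral_mono_of_nonneg (.of_forall fun z => abs_nonneg _)
          ((integrable_taylorKernel_sub x h).const_mul M) (.of_forall fun z => ?_)
        dsimp only
        rw [abs_mul, abs_of_nonneg (taylorKernel_nonneg _ _)]
        exact mul_le_mul_of_nonneg_right (hM z) (taylorKernel_nonneg _ _)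
    _ = M * (h ^ 2 / 2) := by rw [integral_const_mul, integral_taylorKernel_sub]

lemma integral_abs_mul_incrementKernel_sub_le (hg : Integrable g) (x h : ℝ) :
    ∫ z, |g z * incrementKernel h (z - x)| ≤ ∫ z, |g z| := by
  refine integral_mono_of_nonneg (.of_forall fun z => abs_nonneg _) hg.abs (.of_forall fun z => ?_)
  dsimp only
  rw [abs_mul]
  exact mul_le_of_le_one_right (abs_nonneg _) (abs_incrementKernel_le _ _)

lemma taylorKernel_mul_sub_le {x y z : ℝ} (hx : 2 * R < |x|) (hz : |z| ≤ R) (hy : -1 ≤ y) :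
    taylorKernel (x * y) (z - x) ≤ 4 * R * y ^ 2 := by
  obtain ⟨hz₁, hz₂⟩ := abs_le.1 hz
  have hR0 : 0 ≤ R := (abs_nonneg z).trans hz
  suffices h : taylorKernel (x * y) (z - x) ≤ R ∧ (taylorKernel (x * y) (z - x) ≠ 0 → y < -1 / 2) by
    by_cases h0 : taylorKernel (x * y) (z - x) = 0
    · rw [h0]; positivity
    · have hy' := h.2 h0
      nlinarith [h.1, mul_nonneg hR0 (by nlinarith : (0 : ℝ) ≤ 4 * y ^ 2 - 1)]
  have h1y : 0 ≤ 1 + y := by linarith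
  unfold taylorKernel
  split_ifs with h₁ h₂
  · rcases abs_cases x with ⟨hax, hx0⟩ | ⟨hax, hx0⟩
    · exact absurd hx (by linarith)
    · exact ⟨by nlinarith [mul_nonpos_of_nonpos_of_nonneg hx0.le h1y], fun _ => by nlinarith⟩
  · rcases abs_cases x with ⟨hax, hx0⟩ | ⟨hax, hx0⟩
    · exact ⟨by nlinarith [mul_nonneg hx0 h1y], fun _ => by nlinarith⟩
    · exact absurd hx (by linarith)
  · exact ⟨hR0, fun h => absurd rfl h⟩

lemma integral_abs_mul_taylorKernel_mul_sub_le (hM : ∀ z, |g z| ≤ M)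
    (hR : ∀ z, R < |z| → g z = 0) (hg : Integrable g) (x : ℝ) {y : ℝ} (hy : |y| ≤ 1) :
    ∫ z, |g z * taylorKernel (x * y) (z - x)| ≤ (2 * M * R ^ 2 + 4 * R * ∫ z, |g z|) * y ^ 2 := by
  have hM0 : 0 ≤ M := (abs_nonneg _).trans (hM 0)
  have hg0 : 0 ≤ ∫ z, |g z| := integral_nonneg fun z => abs_nonneg _
  rcases le_or_gt |x| (2 * R) with hx | hx
  · have hR0 : 0 ≤ R := by linarith [abs_nonneg x]
    have hx2 : x ^ 2 ≤ 4 * R ^ 2 := by nlinarith [sq_abs x, abs_nonneg x]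
    calc _ ≤ M * ((x * y) ^ 2 / 2) := integral_abs_mul_taylorKernel_sub_le hM x (x * y)
      _ ≤ _ := by
          nlinarith [mul_le_mul_of_nonneg_left hx2 (mul_nonneg hM0 (sq_nonneg y)),
            mul_nonneg (mul_nonneg hR0 hg0) (sq_nonneg y)]
  · calc _ ≤ ∫ z, |g z| * (4 * R * y ^ 2) := by
          refine integral_mono_of_nonneg (.of_forall fun z => abs_nonneg _) (hg.abs.mul_const _)
            (.of_forall fun z => ?_)
          dsimp only
          rcases le_or_gt |z| R with hz | hz
          · rw [abs_mul, abs_of_nonneg (taylorKernel_nonneg _ _)]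
            exact mul_le_mul_of_nonneg_left
              (taylorKernel_mul_sub_le hx hz (abs_le.1 hy).1) (abs_nonneg _)
          · simp [hR z hz]
      _ ≤ _ := by
          rw [integral_mul_const]
          nlinarith [mul_nonneg (mul_nonneg hM0 (sq_nonneg R)) (sq_nonneg y)]

end KernelBounds

section Jumps

/-! A jump with mark `p.2` from position `p.1` lands at `p.1 + J p`; it is compensated to first
order when `|p.2| ≤ 1`. The jumps of `η` have `J p = p.2`, those of `Ũ` have `J p = p.1 * p.2`. -/

variable (J : ℝ × ℝ → ℝ) {f : ℝ → ℝ}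

def compensatedIncrement (f : ℝ → ℝ) (p : ℝ × ℝ) : ℝ :=
  f (p.1 + J p) - f p.1 - if |p.2| ≤ 1 then J p * deriv f p.1 else 0

def smallJumpWeight (p : ℝ × ℝ) (z : ℝ) : ℝ :=
  if |p.2| ≤ 1 then taylorKernel (J p) (z - p.1) else 0

def largeJumpWeight (p : ℝ × ℝ) (z : ℝ) : ℝ :=
  if |p.2| ≤ 1 then 0 else incrementKernel (J p) (z - p.1)

lemma compensatedIncrement_eq_integral (hf : ContDiff ℝ 2 f) (p : ℝ × ℝ) :
    compensatedIncrement J f p = (∫ z, deriv (deriv f) z * smallJumpWeight J p z)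
      + ∫ z, deriv f z * largeJumpWeight J p z := by
  by_cases h : |p.2| ≤ 1
  · simp [compensatedIncrement, smallJumpWeight, largeJumpWeight, h,
      taylor_remainder_eq_integral hf]
  · simp [compensatedIncrement, smallJumpWeight, largeJumpWeight, h,
      sub_eq_integral_mul_incrementKernel (hf.of_le one_le_two)]

variable {J}

lemma measurable_compensatedIncrement (hf : ContDiff ℝ 1 f) (hJ : Measurable J) :
    Measurable (compensatedIncrement J f) := by
  have hf' := (hf.continuous_deriv le_rfl).measurable
  exact ((hf.continuous.measurable.comp (measurable_fst.add hJ)).sub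
    (hf.continuous.measurable.comp measurable_fst)).sub
    (Measurable.ite (measurableSet_le measurable_snd.abs measurable_const)
      (hJ.mul (hf'.comp measurable_fst)) measurable_const)

lemma measurable_smallJumpWeight (hJ : Measurable J) :
    Measurable fun q : (ℝ × ℝ) × ℝ => smallJumpWeight J q.1 q.2 :=
  Measurable.ite (measurableSet_le measurable_fst.snd.abs measurable_const)
    (measurable_taylorKernel.comp ((hJ.comp measurable_fst).prodMk
      (measurable_snd.sub measurable_fst.fst)))
    measurable_const

lemma measurable_largeJumpWeight (hJ : Measurable J) :
    Measurable fun q : (ℝ × ℝ) × ℝ => largeJumpWeight J q.1 q.2 :=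
  Measurable.ite (measurableSet_le measurable_fst.snd.abs measurable_const) measurable_const
    (measurable_incrementKernel.comp ((hJ.comp measurable_fst).prodMk
      (measurable_snd.sub measurable_fst.fst)))

lemma integral_abs_mul_largeJumpWeight_le (hf' : Integrable (deriv f)) (p : ℝ × ℝ) :
    ∫ z, |deriv f z * largeJumpWeight J p z| ≤ (∫ z, |deriv f z|) * min 1 (p.2 ^ 2) := by
  by_cases h : |p.2| ≤ 1
  · simp only [largeJumpWeight, if_pos h, mul_zero, abs_zero, integral_zero]
    positivity
  · have hmin : min 1 (p.2 ^ 2) = 1 :=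
      min_eq_left (by nlinarith [sq_abs p.2, (not_le.1 h)])
    simpa [largeJumpWeight, h, hmin] using
      integral_abs_mul_incrementKernel_sub_le hf' p.1 (J p)

end Jumps

section JumpFubini

variable {J : ℝ × ℝ → ℝ} {f g : ℝ → ℝ}

lemma integrable_mul_smallJumpWeight (hJ : Measurable J) (hg : Integrable g) (p : ℝ × ℝ) :
    Integrable fun z => g z * smallJumpWeight J p z := by
  refine hg.mul_bdd
    ((measurable_smallJumpWeight hJ).comp measurable_prodMk_left).aestronglyMeasurable
    (c := |J p|) (.of_forall fun z => ?_)
  simp only [smallJumpWeight, Real.norm_eq_abs]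
  split_ifs
  · rw [abs_of_nonneg (taylorKernel_nonneg _ _)]; exact taylorKernel_le_abs _ _
  · simp

lemma integrable_mul_largeJumpWeight (hJ : Measurable J) (hg : Integrable g) (p : ℝ × ℝ) :
    Integrable fun z => g z * largeJumpWeight J p z := by
  refine hg.mul_bdd
    ((measurable_largeJumpWeight hJ).comp measurable_prodMk_left).aestronglyMeasurable
    (c := 1) (.of_forall fun z => ?_)
  simp only [largeJumpWeight, Real.norm_eq_abs]
  split_ifs
  · simp
  · exact abs_incrementKernel_le _ _

lemma integrable_prod_mul_smallJumpWeight {P : Measure (ℝ × ℝ)} (hJ : Measurable J)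
    (hg : Continuous g) (hg' : Integrable g) {φ : ℝ × ℝ → ℝ} (hφ : Integrable φ P)
    (hbound : ∀ p, ∫ z, |g z * smallJumpWeight J p z| ≤ φ p) :
    Integrable (fun q : (ℝ × ℝ) × ℝ => g q.2 * smallJumpWeight J q.1 q.2) (P.prod volume) :=
  integrable_prod_of_integral_abs_le
    ((hg.measurable.comp measurable_snd).mul (measurable_smallJumpWeight hJ))
    (integrable_mul_smallJumpWeight hJ hg') hφ hbound

lemma integrable_prod_mul_largeJumpWeight {P : Measure (ℝ × ℝ)} (hJ : Measurable J)
    (hg : Continuous g) (hg' : Integrable g) {φ : ℝ × ℝ → ℝ} (hφ : Integrable φ P)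
    (hbound : ∀ p, ∫ z, |g z * largeJumpWeight J p z| ≤ φ p) :
    Integrable (fun q : (ℝ × ℝ) × ℝ => g q.2 * largeJumpWeight J q.1 q.2) (P.prod volume) :=
  integrable_prod_of_integral_abs_le
    ((hg.measurable.comp measurable_snd).mul (measurable_largeJumpWeight hJ))
    (integrable_mul_largeJumpWeight hJ hg') hφ hbound

lemma integrable_compensatedIncrement_prodMk {ν : Measure ℝ} (hf : ContDiff ℝ 2 f)
    (hJ : Measurable J) (hν : Integrable (fun y => min 1 (y ^ 2)) ν) {C₂ C₁ : ℝ}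
    (hsmall : ∀ p, ∫ z, |deriv (deriv f) z * smallJumpWeight J p z| ≤ C₂ * min 1 (p.2 ^ 2))
    (hlarge : ∀ p, ∫ z, |deriv f z * largeJumpWeight J p z| ≤ C₁ * min 1 (p.2 ^ 2)) (x : ℝ) :
    Integrable (fun y => compensatedIncrement J f (x, y)) ν := by
  refine Integrable.mono' (hν.const_mul (C₂ + C₁))
    ((measurable_compensatedIncrement (hf.of_le one_le_two) hJ).comp
      measurable_prodMk_left).aestronglyMeasurable (.of_forall fun y => ?_)
  rw [compensatedIncrement_eq_integral J hf, Real.norm_eq_abs, add_mul]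
  exact (abs_add_le _ _).trans (add_le_add (abs_integral_le_integral_abs.trans (hsmall _))
    (abs_integral_le_integral_abs.trans (hlarge _)))

section IntegrableKernels

variable {P : Measure (ℝ × ℝ)} (hf : ContDiff ℝ 2 f)
  (h₂ : Integrable (fun q : (ℝ × ℝ) × ℝ => deriv (deriv f) q.2 * smallJumpWeight J q.1 q.2)
    (P.prod volume))
  (h₁ : Integrable (fun q : (ℝ × ℝ) × ℝ => deriv f q.2 * largeJumpWeight J q.1 q.2)
    (P.prod volume))
include hf h₂ h₁

lemma integrable_compensatedIncrement : Integrable (compensatedIncrement J f) P :=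
  (h₂.integral_prod_left.add h₁.integral_prod_left).congr
    (.of_forall fun p => (compensatedIncrement_eq_integral J hf p).symm)

lemma integral_compensatedIncrement_eq [SFinite P] :
    ∫ p, compensatedIncrement J f p ∂P
      = (∫ z, ∫ p, deriv (deriv f) z * smallJumpWeight J p z ∂P)
        + ∫ z, ∫ p, deriv f z * largeJumpWeight J p z ∂P := by
  simp_rw [compensatedIncrement_eq_integral J hf]
  rw [integral_add h₂.integral_prod_left h₁.integral_prod_left]
  exact congrArg₂ (· + ·) (integral_integral_swap h₂) (integral_integral_swap h₁)

end IntegrableKernels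

/-- `Φ₂` and `Φ₁` only have to be identified at those `z` whose slices are integrable, which Fubini
guarantees for almost every `z`. -/
theorem integral_integral_compensatedIncrement_eq {μ ν : Measure ℝ} [IsFiniteMeasure μ]
    [SFinite ν] (hf : ContDiff ℝ 2 f) (hsupp : HasCompactSupport f) (hJ : Measurable J)
    (hν : Integrable (fun y => min 1 (y ^ 2)) ν) {C : ℝ}
    (hsmall : ∀ p, ∫ z, |deriv (deriv f) z * smallJumpWeight J p z| ≤ C * min 1 (p.2 ^ 2))
    {Φ₂ Φ₁ : ℝ → ℝ}
    (hΦ₂ : ∀ᵐ z, Integrable (fun p => deriv (deriv f) z * smallJumpWeight J p z) (μ.prod ν) →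
      ∫ p, deriv (deriv f) z * smallJumpWeight J p z ∂(μ.prod ν) = deriv (deriv f) z * Φ₂ z)
    (hΦ₁ : ∀ᵐ z, Integrable (fun p => deriv f z * largeJumpWeight J p z) (μ.prod ν) →
      ∫ p, deriv f z * largeJumpWeight J p z ∂(μ.prod ν) = deriv f z * Φ₁ z) :
    (∀ x, Integrable (fun y => compensatedIncrement J f (x, y)) ν) ∧
    Integrable (fun x => ∫ y, compensatedIncrement J f (x, y) ∂ν) μ ∧
    Integrable (fun z => deriv (deriv f) z * Φ₂ z) ∧
    Integrable (fun z => deriv f z * Φ₁ z) ∧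
    ∫ x, ∫ y, compensatedIncrement J f (x, y) ∂ν ∂μ
      = (∫ z, deriv (deriv f) z * Φ₂ z) + ∫ z, deriv f z * Φ₁ z := by
  have hf₁ := hf.continuous_deriv one_le_two
  have hf₂ := hf.deriv'.continuous_deriv le_rfl
  have hint₁ : Integrable (deriv f) := hf₁.integrable_of_hasCompactSupport hsupp.deriv
  have hlarge := integral_abs_mul_largeJumpWeight_le (J := J) hint₁
  have hP : Integrable (fun p : ℝ × ℝ => min 1 (p.2 ^ 2)) (μ.prod ν) := hν.comp_snd μ
  have h₂ := integrable_prod_mul_smallJumpWeight hJ hf₂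
    (hf₂.integrable_of_hasCompactSupport hsupp.deriv.deriv) (hP.const_mul C) hsmall
  have h₁ := integrable_prod_mul_largeJumpWeight hJ hf₁ hint₁ (hP.const_mul _) hlarge
  have hinc := integrable_compensatedIncrement hf h₂ h₁
  have hid₂ := (h₂.prod_left_ae.and hΦ₂).mono fun z h => h.2 h.1
  have hid₁ := (h₁.prod_left_ae.and hΦ₁).mono fun z h => h.2 h.1
  refine ⟨integrable_compensatedIncrement_prodMk hf hJ hν hsmall hlarge, hinc.integral_prod_left,
    h₂.integral_prod_right.congr hid₂, h₁.integral_prod_right.congr hid₁, ?_⟩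
  rw [← integral_prod _ hinc, integral_compensatedIncrement_eq hf h₂ h₁, integral_congr_ae hid₂,
    integral_congr_ae hid₁]

end JumpFubini

section LevyParts

variable {f g : ℝ → ℝ} {M R : ℝ}

lemma integral_abs_mul_smallJumpWeight_snd_le (hM : ∀ z, |g z| ≤ M) (p : ℝ × ℝ) :
    ∫ z, |g z * smallJumpWeight Prod.snd p z| ≤ M / 2 * min 1 (p.2 ^ 2) := by
  by_cases h : |p.2| ≤ 1
  · rw [min_one_sq_of_abs_le_one h, div_mul_eq_mul_div, mul_div_assoc]
    simpa [smallJumpWeight, h] using integral_abs_mul_taylorKernel_sub_le hM p.1 p.2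
  · have hM0 : 0 ≤ M := (abs_nonneg _).trans (hM 0)
    simp only [smallJumpWeight, if_neg h, mul_zero, abs_zero, integral_zero]
    positivity

lemma integral_abs_mul_smallJumpWeight_mul_le (hM : ∀ z, |g z| ≤ M) (hR₀ : 0 ≤ R)
    (hR : ∀ z, R < |z| → g z = 0) (hg : Integrable g) (p : ℝ × ℝ) :
    ∫ z, |g z * smallJumpWeight (fun p => p.1 * p.2) p z|
      ≤ (2 * M * R ^ 2 + 4 * R * ∫ z, |g z|) * min 1 (p.2 ^ 2) := by
  by_cases h : |p.2| ≤ 1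
  · rw [min_one_sq_of_abs_le_one h]
    simpa [smallJumpWeight, h] using integral_abs_mul_taylorKernel_mul_sub_le hM hR hg p.1 h
  · have hM0 : 0 ≤ M := (abs_nonneg _).trans (hM 0)
    simp only [smallJumpWeight, if_neg h, mul_zero, abs_zero, integral_zero]
    positivity

variable {ν : Measure ℝ} (μ : Measure ℝ) [IsFiniteMeasure μ]

theorem integral_integral_compensatedIncrement_snd_eq (hf : ContDiff ℝ 2 f)
    (hsupp : HasCompactSupport f) (hν : IsLevyMeasure ν) :
    (∀ x, Integrable (fun y => compensatedIncrement Prod.snd f (x, y)) ν) ∧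
    Integrable (fun x => ∫ y, compensatedIncrement Prod.snd f (x, y) ∂ν) μ ∧
    Integrable (fun z => deriv (deriv f) z * convM (Smap ν) μ z) ∧
    Integrable (fun z => deriv f z * convM (Bmap ν) μ z) ∧
    ∫ x, ∫ y, compensatedIncrement Prod.snd f (x, y) ∂ν ∂μ
      = (∫ z, deriv (deriv f) z * convM (Smap ν) μ z) + ∫ z, deriv f z * convM (Bmap ν) μ z := by
  have := hν.sigmaFinite
  obtain ⟨M, hM⟩ := exists_abs_le_of_hasCompactSupport
    (hf.deriv'.continuous_deriv le_rfl) hsupp.deriv.deriv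
  refine integral_integral_compensatedIncrement_eq hf hsupp measurable_snd
    hν.integrable_min_one_sq (integral_abs_mul_smallJumpWeight_snd_le hM) ?_
    (.of_forall fun z hint => integral_prod_const_mul_eq (v := fun x => Bmap ν (z - x)) _ hint
      (.of_forall fun x => integral_incrementKernel_eq_Bmap ν (z - x)))
  filter_upwards [ae_forall_ae_ne μ] with z hz hint
  exact integral_prod_const_mul_eq (v := fun x => Smap ν (z - x)) _ hint
    (hz.mono fun x hx => integral_taylorKernel_eq_Smap ν (sub_ne_zero.2 hx.symm))

theorem integral_integral_compensatedIncrement_mul_eq (hf : ContDiff ℝ 2 f)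
    (hsupp : HasCompactSupport f) (hν : IsLevyMeasure ν) :
    (∀ x, Integrable (fun y => compensatedIncrement (fun p => p.1 * p.2) f (x, y))
      (ν.restrict (Ici (-1)))) ∧
    Integrable (fun x => ∫ y in Ici (-1), compensatedIncrement (fun p => p.1 * p.2) f (x, y) ∂ν) μ ∧
    Integrable (fun z => deriv (deriv f) z * rmu ν μ z) ∧
    Integrable (fun z => deriv f z * kmu ν μ z) ∧
    ∫ x, ∫ y in Ici (-1), compensatedIncrement (fun p => p.1 * p.2) f (x, y) ∂ν ∂μ
      = (∫ z, deriv (deriv f) z * rmu ν μ z) + ∫ z, deriv f z * kmu ν μ z := by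
  have := hν.sigmaFinite
  have hf₂ := hf.deriv'.continuous_deriv le_rfl
  obtain ⟨M, hM⟩ := exists_abs_le_of_hasCompactSupport hf₂ hsupp.deriv.deriv
  obtain ⟨R, hR₀, hR⟩ := hsupp.deriv.deriv.exists_pos_le_norm
  refine integral_integral_compensatedIncrement_eq hf hsupp (measurable_fst.mul measurable_snd)
    hν.integrable_min_one_sq.restrict
    (integral_abs_mul_smallJumpWeight_mul_le hM hR₀.le (fun z hz => hR z hz.le)
      (hf₂.integrable_of_hasCompactSupport hsupp.deriv.deriv)) ?_
    (.of_forall fun z hint => ?_)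
  · filter_upwards [ae_forall_ae_ne μ, Measure.ae_ne volume 0] with z hz hz₀ hint
    rw [rmu_eq_integral ν μ hz₀]
    exact integral_prod_const_mul_eq _ hint
      (hz.mono fun x hx => setIntegral_taylorKernel_mul_eq ν hx.symm)
  · rw [kmu_eq_integral ν μ]
    exact integral_prod_const_mul_eq _ hint
      (.of_forall fun x => setIntegral_incrementKernel_mul_eq ν x z)

end LevyParts

end KEF

theorem stmt2_general (ση2 γη σU2 γU : ℝ) (νη νU : Measure ℝ)
    (hνη : IsLevyMeasure νη) (hνU : IsLevyMeasure νU)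
    (μ : Measure ℝ) [IsProbabilityMeasure μ]
    (f : ℝ → ℝ) (hf : ContDiff ℝ (⊤ : ℕ∞) f) (hsupp : HasCompactSupport f) :
    (∀ x : ℝ, MeasureTheory.Integrable
        (fun y => f (x + y) - f x - (if |y| ≤ 1 then y * deriv f x else 0)) νη) ∧
    (∀ x : ℝ, MeasureTheory.IntegrableOn
        (fun y => f (x + x * y) - f x - (if |y| ≤ 1 then x * y * deriv f x else 0))
        (Ici (-1 : ℝ)) νU) ∧
    MeasureTheory.Integrable (levyGen ση2 γη σU2 γU νη νU f) μ ∧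
    MeasureTheory.Integrable (fun z => deriv (deriv f) z * (ση2 / 2 + z ^ 2 * σU2 / 2)) μ ∧
    MeasureTheory.Integrable
      (fun z => deriv (deriv f) z * (convM (Smap νη) μ z + rmu νU μ z)) ∧
    MeasureTheory.Integrable (fun z => deriv f z * (γη + z * γU)) μ ∧
    MeasureTheory.Integrable (fun z => deriv f z * convM (Bmap νη) μ z) ∧
    MeasureTheory.Integrable (fun z => deriv f z * kmu νU μ z) ∧
    (∫ x, levyGen ση2 γη σU2 γU νη νU f x ∂μ) =
      (∫ z, deriv (deriv f) z * (ση2 / 2 + z ^ 2 * σU2 / 2) ∂μ)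
        + (∫ z, deriv (deriv f) z * (convM (Smap νη) μ z + rmu νU μ z))
        + (∫ z, deriv f z * (γη + z * γU) ∂μ)
        + (∫ z, deriv f z * convM (Bmap νη) μ z)
        + ∫ z, deriv f z * kmu νU μ z := by
  have hf2 : ContDiff ℝ 2 f := hf.of_le (WithTop.coe_le_coe.2 le_top)
  obtain ⟨hη₁, hη₂, hS, hB, hη⟩ := integral_integral_compensatedIncrement_snd_eq μ hf2 hsupp hνη
  obtain ⟨hU₁, hU₂, hr, hk, hU⟩ := integral_integral_compensatedIncrement_mul_eq μ hf2 hsupp hνU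
  have hdiff : Integrable (fun z => deriv (deriv f) z * (ση2 / 2 + z ^ 2 * σU2 / 2)) μ :=
    ((hf2.deriv'.continuous_deriv le_rfl).mul (by fun_prop)).integrable_of_hasCompactSupport
      hsupp.deriv.deriv.mul_right
  have hdrift : Integrable (fun z => deriv f z * (γη + z * γU)) μ :=
    ((hf2.continuous_deriv one_le_two).mul (by fun_prop)).integrable_of_hasCompactSupport
      hsupp.deriv.mul_right
  have hgen : levyGen ση2 γη σU2 γU νη νU f = fun x =>
      deriv (deriv f) x * (ση2 / 2 + x ^ 2 * σU2 / 2) + deriv f x * (γη + x * γU)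
        + (∫ y, compensatedIncrement Prod.snd f (x, y) ∂νη)
        + ∫ y in Ici (-1), compensatedIncrement (fun p => p.1 * p.2) f (x, y) ∂νU := by
    ext x
    simp only [levyGen, compensatedIncrement]
    ring
  have hsplit : ∫ z, deriv (deriv f) z * (convM (Smap νη) μ z + rmu νU μ z)
      = (∫ z, deriv (deriv f) z * convM (Smap νη) μ z) + ∫ z, deriv (deriv f) z * rmu νU μ z := by
    simp_rw [mul_add]
    exact integral_add hS hr
  have hloc : Integrable (fun x =>
      deriv (deriv f) x * (ση2 / 2 + x ^ 2 * σU2 / 2) + deriv f x * (γη + x * γU)) μ :=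
    hdiff.add hdrift
  have hlocη : Integrable (fun x =>
      deriv (deriv f) x * (ση2 / 2 + x ^ 2 * σU2 / 2) + deriv f x * (γη + x * γU)
        + ∫ y, compensatedIncrement Prod.snd f (x, y) ∂νη) μ :=
    hloc.add hη₂
  refine ⟨hη₁, hU₁, hgen ▸ hlocη.add hU₂, hdiff, by simp_rw [mul_add]; exact hS.add hr, hdrift,
    hB, hk, ?_⟩
  simp only [hgen]
  rw [integral_add hlocη hU₂, integral_add hloc hη₂, integral_add hdiff hdrift, hη, hU, hsplit]
  ring

theorem stmt2 (ση2 γη σU2 γU : ℝ) (νη νU : Measure ℝ)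
    (hση : 0 ≤ ση2) (hσU : 0 ≤ σU2)
    (hνη : IsLevyMeasure νη) (hνU : IsLevyMeasure νU)
    (hconc : νU (Iio (-1 : ℝ)) = 0)
    (μ : Measure ℝ) [IsProbabilityMeasure μ]
    (f : ℝ → ℝ) (hf : ContDiff ℝ (⊤ : ℕ∞) f) (hsupp : HasCompactSupport f) :
    (∀ x : ℝ, MeasureTheory.Integrable
        (fun y => f (x + y) - f x - (if |y| ≤ 1 then y * deriv f x else 0)) νη) ∧
    (∀ x : ℝ, MeasureTheory.IntegrableOn
        (fun y => f (x + x * y) - f x - (if |y| ≤ 1 then x * y * deriv f x else 0))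
        (Ici (-1 : ℝ)) νU) ∧
    MeasureTheory.Integrable (levyGen ση2 γη σU2 γU νη νU f) μ ∧
    MeasureTheory.Integrable (fun z => deriv (deriv f) z * (ση2 / 2 + z ^ 2 * σU2 / 2)) μ ∧
    MeasureTheory.Integrable
      (fun z => deriv (deriv f) z * (convM (Smap νη) μ z + rmu νU μ z)) ∧
    MeasureTheory.Integrable (fun z => deriv f z * (γη + z * γU)) μ ∧
    MeasureTheory.Integrable (fun z => deriv f z * convM (Bmap νη) μ z) ∧
    MeasureTheory.Integrable (fun z => deriv f z * kmu νU μ z) ∧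
    (∫ x, levyGen ση2 γη σU2 γU νη νU f x ∂μ) =
      (∫ z, deriv (deriv f) z * (ση2 / 2 + z ^ 2 * σU2 / 2) ∂μ)
        + (∫ z, deriv (deriv f) z * (convM (Smap νη) μ z + rmu νU μ z))
        + (∫ z, deriv f z * (γη + z * γU) ∂μ)
        + (∫ z, deriv f z * convM (Bmap νη) μ z)
        + ∫ z, deriv f z * kmu νU μ z :=
  stmt2_general ση2 γη σU2 γU νη νU hνη hνU μ f hf hsupp
end
end

section
/- Let G⁺ and G⁻ be locally finite Borel measures on ℝ (finite on compact sets). If ∫_ℝ f''(z) G⁺(dz) = ∫_ℝ f''(z) G⁻(dz) for every f ∈ C_c^∞(ℝ) (both integrals being finite), then there exist constants C₁, C₂ ∈ ℝ such that for every continuous compactly supported g: ℝ → ℝ, ∫_ℝ g(z) G⁺(dz) − ∫_ℝ g(z) G⁻(dz) = ∫_ℝ g(z) (C₁ z + C₂) dz. -/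
/-!
A test function `u` is the second derivative of a test function exactly when its moments
`∫ u` and `∫ x * u x` vanish. Subtracting from `u` the combination of an even bump `χ` and of `χ'`
with the same two moments therefore shows that `∫ u ∂G⁺ - ∫ u ∂G⁻` is a linear function of
`(∫ u, ∫ x * u x)`, i.e. the integral of `u` against an affine function. Mollification and
dominated convergence extend this from smooth to continuous compactly supported functions.
-/

open MeasureTheory Set Filter Function
open scoped Pointwise ContDiff Convolution Topology

noncomputable section

theorem integral_deriv_eq_zero_of_hasCompactSupport {E : Type*} [NormedAddCommGroup E]
    [NormedSpace ℝ E] {f : ℝ → E} (hf : ContDiff ℝ 1 f) (hs : HasCompactSupport f) :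
    ∫ x, deriv f x = 0 :=
  integral_eq_zero_of_hasDerivAt_of_integrable
    (fun x => (hf.differentiable one_ne_zero x).hasDerivAt)
    ((hf.continuous_deriv le_rfl).integrable_of_hasCompactSupport hs.deriv)
    (hf.continuous.integrable_of_hasCompactSupport hs)

theorem integral_mul_deriv_eq_neg_integral {f : ℝ → ℝ} (hf : ContDiff ℝ 1 f)
    (hs : HasCompactSupport f) : ∫ x, x * deriv f x = -∫ x, f x := by
  have h := integral_mul_deriv_eq_deriv_mul_of_integrable (u := id) (u' := fun _ => 1) (v := f)
    (fun x _ => hasDerivAt_id x) (fun x _ => (hf.differentiable one_ne_zero x).hasDerivAt)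
    ((continuous_id.mul (hf.continuous_deriv le_rfl)).integrable_of_hasCompactSupport
      hs.deriv.mul_left)
    ((continuous_const.mul hf.continuous).integrable_of_hasCompactSupport hs.mul_left)
    ((continuous_id.mul hf.continuous).integrable_of_hasCompactSupport hs.mul_left)
  simpa using h

theorem exists_hasCompactSupport_deriv_eq {h : ℝ → ℝ} (hh : ContDiff ℝ ∞ h)
    (hs : HasCompactSupport h) (h0 : ∫ x, h x = 0) :
    ∃ F : ℝ → ℝ, ContDiff ℝ ∞ F ∧ HasCompactSupport F ∧ deriv F = h := by
  obtain ⟨a, ha⟩ := hs.isCompact.bddBelow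
  obtain ⟨b, hb⟩ := hs.isCompact.bddAbove
  set F : ℝ → ℝ := fun x => ∫ t in (a - 1)..x, h t
  have hF : ∀ x, HasDerivAt F (h x) x := fun x =>
    intervalIntegral.integral_hasDerivAt_right (hh.continuous.intervalIntegrable _ _)
      (hh.continuous.stronglyMeasurableAtFilter _ _) hh.continuous.continuousAt
  have hFd : deriv F = h := funext fun x => (hF x).deriv
  refine ⟨F, contDiff_infty_iff_deriv.mpr ⟨fun x => (hF x).differentiableAt, hFd ▸ hh⟩,
    HasCompactSupport.intro (K := Icc a b) isCompact_Icc fun x hx => ?_, hFd⟩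
  rcases not_and_or.mp hx with hxa | _
  · have : EqOn h 0 (uIcc (a - 1) x) := fun t ht =>
      image_eq_zero_of_notMem_tsupport fun hmem =>
        absurd (ht.2.trans_lt (max_lt (by linarith) (not_le.mp hxa))) (not_lt.mpr (ha hmem))
    simp only [F, intervalIntegral.integral_congr this, Pi.zero_apply,
      intervalIntegral.integral_zero]
  · have : support h ⊆ Ioc (a - 1) x := fun t ht =>
      ⟨by linarith [ha (subset_tsupport h ht)], by linarith [hb (subset_tsupport h ht)]⟩
    simp only [F, intervalIntegral.integral_eq_integral_of_support_subset this, h0]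

theorem exists_hasCompactSupport_deriv_deriv_eq {h : ℝ → ℝ} (hh : ContDiff ℝ ∞ h)
    (hs : HasCompactSupport h) (h0 : ∫ x, h x = 0) (h1 : ∫ x, x * h x = 0) :
    ∃ f : ℝ → ℝ, ContDiff ℝ ∞ f ∧ HasCompactSupport f ∧ deriv (deriv f) = h := by
  obtain ⟨F, hF, hFs, rfl⟩ := exists_hasCompactSupport_deriv_eq hh hs h0
  have hF0 : ∫ x, F x = 0 := by
    rw [← neg_eq_zero, ← integral_mul_deriv_eq_neg_integral (hF.of_le (by simp)) hFs, h1]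
  obtain ⟨f, hf, hfs, rfl⟩ := exists_hasCompactSupport_deriv_eq hF hFs hF0
  exact ⟨f, hf, hfs, rfl⟩

def evenBump : ℝ → ℝ := (⟨1, 2, one_pos, one_lt_two⟩ : ContDiffBump (0 : ℝ)).normed volume

theorem contDiff_evenBump : ContDiff ℝ ∞ evenBump := ContDiffBump.contDiff_normed _

theorem hasCompactSupport_evenBump : HasCompactSupport evenBump :=
  ContDiffBump.hasCompactSupport_normed _

theorem integral_evenBump : ∫ x, evenBump x = 1 := ContDiffBump.integral_normed _

theorem integral_mul_evenBump : ∫ x, x * evenBump x = 0 := by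
  have h := integral_neg_eq_self (fun x => x * evenBump x) volume
  have heven : ∀ x, evenBump (-x) = evenBump x := ContDiffBump.normed_neg _
  simp only [heven, neg_mul, integral_neg] at h
  linarith

theorem integral_mul_deriv_evenBump : ∫ x, x * deriv evenBump x = -1 := by
  rw [integral_mul_deriv_eq_neg_integral (contDiff_evenBump.of_le (by simp))
    hasCompactSupport_evenBump, integral_evenBump]

theorem integral_sub_const_mul_add_const_mul {X : Type*} [MeasurableSpace X] {μ : Measure X}
    {u v w : X → ℝ} (hu : Integrable u μ) (hv : Integrable v μ) (hw : Integrable w μ)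
    (a b : ℝ) :
    ∫ x, (u x - a * v x + b * w x) ∂μ = ∫ x, u x ∂μ - a * ∫ x, v x ∂μ + b * ∫ x, w x ∂μ := by
  have huv : Integrable (fun x => u x - a * v x) μ := hu.sub (hv.const_mul a)
  rw [integral_add huv (hw.const_mul b), integral_sub hu (hv.const_mul a),
    integral_const_mul, integral_const_mul]

theorem exists_integral_sub_integral_eq_of_integral_deriv_deriv_eq {μ ν : Measure ℝ}
    [IsFiniteMeasureOnCompacts μ] [IsFiniteMeasureOnCompacts ν]
    (h : ∀ f : ℝ → ℝ, ContDiff ℝ ∞ f → HasCompactSupport f →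
      ∫ x, deriv (deriv f) x ∂μ = ∫ x, deriv (deriv f) x ∂ν) :
    ∃ C₁ C₂ : ℝ, ∀ u : ℝ → ℝ, ContDiff ℝ ∞ u → HasCompactSupport u →
      ∫ x, u x ∂μ - ∫ x, u x ∂ν = ∫ x, u x * (C₁ * x + C₂) := by
  refine ⟨∫ x, deriv evenBump x ∂ν - ∫ x, deriv evenBump x ∂μ,
    ∫ x, evenBump x ∂μ - ∫ x, evenBump x ∂ν, fun u hu hus => ?_⟩
  have hχ := contDiff_evenBump
  have hχs := hasCompactSupport_evenBump
  have hχ' : ContDiff ℝ ∞ (deriv evenBump) := (contDiff_infty_iff_deriv.mp hχ).2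
  have hχ's : HasCompactSupport (deriv evenBump) := hχs.deriv
  have hint : ∀ {ρ : Measure ℝ} [IsFiniteMeasureOnCompacts ρ] {g : ℝ → ℝ}, ContDiff ℝ ∞ g →
      HasCompactSupport g → Integrable g ρ ∧ Integrable (fun x => x * g x) ρ :=
    fun hg hgs => ⟨hg.continuous.integrable_of_hasCompactSupport hgs,
      (continuous_id.mul hg.continuous).integrable_of_hasCompactSupport hgs.mul_left⟩
  set a := ∫ x, u x
  set b := ∫ x, x * u x
  -- `h₀` has vanishing moments of order 0 and 1, hence is the second derivative of a test function
  set h₀ : ℝ → ℝ := fun x => u x - a * evenBump x + b * deriv evenBump x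
  have h₀_eq : ∀ {ρ : Measure ℝ} [IsFiniteMeasureOnCompacts ρ], ∫ x, h₀ x ∂ρ =
      ∫ x, u x ∂ρ - a * ∫ x, evenBump x ∂ρ + b * ∫ x, deriv evenBump x ∂ρ :=
    integral_sub_const_mul_add_const_mul (hint hu hus).1 (hint hχ hχs).1 (hint hχ' hχ's).1 a b
  have h₀_int : ∫ x, h₀ x = 0 := by
    rw [h₀_eq, integral_evenBump, integral_deriv_eq_zero_of_hasCompactSupport
      (hχ.of_le (by simp)) hχs]
    ring
  have h₀_mom : ∫ x, x * h₀ x = 0 := by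
    have hpt : (fun x => x * h₀ x) =
        fun x => x * u x - a * (x * evenBump x) + b * (x * deriv evenBump x) :=
      funext fun x => by simp only [h₀]; ring
    rw [hpt, integral_sub_const_mul_add_const_mul (hint hu hus).2 (hint hχ hχs).2
      (hint hχ' hχ's).2, integral_mul_evenBump, integral_mul_deriv_evenBump]
    ring
  obtain ⟨f, hf, hfs, hf''⟩ := exists_hasCompactSupport_deriv_deriv_eq
    ((hu.sub (contDiff_const.mul hχ)).add (contDiff_const.mul hχ'))
    ((hus.sub hχs.mul_left).add hχ's.mul_left) h₀_int h₀_mom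
  have key := h f hf hfs
  rw [hf'', h₀_eq, h₀_eq] at key
  have hrhs : ∀ C₁ C₂ : ℝ, ∫ x, u x * (C₁ * x + C₂) = C₁ * b + C₂ * a := fun C₁ C₂ => by
    have hpt : (fun x => u x * (C₁ * x + C₂)) = fun x => C₁ * (x * u x) + C₂ * u x :=
      funext fun x => by ring
    rw [hpt, integral_add ((hint hu hus).2.const_mul C₁) ((hint hu hus).1.const_mul C₂),
      integral_const_mul, integral_const_mul]
  rw [hrhs]
  linear_combination key

theorem tendsto_integral_mul_of_support_subset {X : Type*} [TopologicalSpace X] [T2Space X]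
    [MeasurableSpace X] [OpensMeasurableSpace X] {μ : Measure X} [IsFiniteMeasureOnCompacts μ]
    {K : Set X} (hK : IsCompact K) {u : ℕ → X → ℝ} {g w : X → ℝ} {C : ℝ}
    (hu : ∀ n, Continuous (u n)) (hw : Continuous w) (hsupp : ∀ n, support (u n) ⊆ K)
    (hbound : ∀ n x, ‖u n x‖ ≤ C) (hlim : ∀ x, Tendsto (fun n => u n x) atTop (𝓝 (g x))) :
    Tendsto (fun n => ∫ x, u n x * w x ∂μ) atTop (𝓝 (∫ x, g x * w x ∂μ)) := by
  refine tendsto_integral_of_dominated_convergence (K.indicator fun x => C * |w x|)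
    (fun n => ((hu n).mul hw).aestronglyMeasurable)
    ((integrable_indicator_iff hK.measurableSet).mpr
      ((continuous_const.mul hw.abs).continuousOn.integrableOn_compact hK))
    (fun n => ae_of_all _ fun x => ?_) (ae_of_all _ fun x => (hlim x).mul_const (w x))
  by_cases hx : x ∈ K
  · rw [indicator_of_mem hx, norm_mul, Real.norm_eq_abs (w x)]
    exact mul_le_mul_of_nonneg_right (hbound n x) (abs_nonneg _)
  · rw [indicator_of_notMem hx, notMem_support.mp fun hmem => hx (hsupp n hmem), zero_mul,
      norm_zero]

def mollifier (n : ℕ) : ContDiffBump (0 : ℝ) :=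
  ⟨1 / (n + 2), 1 / (n + 1), by positivity, by gcongr; linarith⟩

def mollify (g : ℝ → ℝ) (n : ℕ) : ℝ → ℝ :=
  (mollifier n).normed volume ⋆[ContinuousLinearMap.lsmul ℝ ℝ, volume] g

section Mollify

variable {g : ℝ → ℝ}

theorem contDiff_mollify (hg : Continuous g) (n : ℕ) : ContDiff ℝ ∞ (mollify g n) :=
  (mollifier n).hasCompactSupport_normed.contDiff_convolution_left _
    (mollifier n).contDiff_normed hg.locallyIntegrable

theorem support_mollify_subset (n : ℕ) :
    support (mollify g n) ⊆ Metric.closedBall (0 : ℝ) 1 + tsupport g := by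
  refine (support_convolution_subset _).trans (add_subset_add ?_ (subset_tsupport g))
  rw [(mollifier n).support_normed_eq]
  refine Metric.ball_subset_closedBall.trans (Metric.closedBall_subset_closedBall ?_)
  simp only [mollifier]
  exact div_le_one_of_le₀ (by linarith [n.cast_nonneg (α := ℝ)]) (by positivity)

theorem hasCompactSupport_mollify (hgs : HasCompactSupport g) (n : ℕ) :
    HasCompactSupport (mollify g n) :=
  (mollifier n).hasCompactSupport_normed.convolution _ hgs

theorem norm_mollify_le {C : ℝ} (hC : ∀ x, ‖g x‖ ≤ C) (n : ℕ) (x : ℝ) : ‖mollify g n x‖ ≤ C := by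
  set φ := (mollifier n).normed volume
  have hnorm : ∀ t, ‖φ t • g (x - t)‖ ≤ φ t * C := fun t => by
    rw [norm_smul, Real.norm_of_nonneg ((mollifier n).nonneg_normed t)]
    exact mul_le_mul_of_nonneg_left (hC _) ((mollifier n).nonneg_normed t)
  calc ‖mollify g n x‖ ≤ ∫ t, φ t * C :=
        norm_integral_le_of_norm_le ((mollifier n).integrable_normed.mul_const C)
          (ae_of_all _ hnorm)
    _ = C := by rw [integral_mul_const, (mollifier n).integral_normed, one_mul]

theorem tendsto_mollify (hg : Continuous g) (x : ℝ) :
    Tendsto (fun n => mollify g n x) atTop (𝓝 (g x)) :=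
  ContDiffBump.convolution_tendsto_right_of_continuous tendsto_one_div_add_atTop_nhds_zero_nat hg x

theorem integral_sub_integral_eq_of_forall_contDiff {μ ν : Measure ℝ}
    [IsFiniteMeasureOnCompacts μ] [IsFiniteMeasureOnCompacts ν] {w : ℝ → ℝ} (hw : Continuous w)
    (h : ∀ u : ℝ → ℝ, ContDiff ℝ ∞ u → HasCompactSupport u →
      ∫ x, u x ∂μ - ∫ x, u x ∂ν = ∫ x, u x * w x)
    (hg : Continuous g) (hgs : HasCompactSupport g) :
    ∫ x, g x ∂μ - ∫ x, g x ∂ν = ∫ x, g x * w x := by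
  obtain ⟨C, hC⟩ := hg.bounded_above_of_compact_support hgs
  have hK : IsCompact (Metric.closedBall (0 : ℝ) 1 + tsupport g) :=
    (isCompact_closedBall _ _).add hgs
  have hlim : ∀ {ρ : Measure ℝ} [IsFiniteMeasureOnCompacts ρ] {v : ℝ → ℝ}, Continuous v →
      Tendsto (fun n => ∫ x, mollify g n x * v x ∂ρ) atTop (𝓝 (∫ x, g x * v x ∂ρ)) :=
    fun hv => tendsto_integral_mul_of_support_subset hK
      (fun n => (contDiff_mollify hg n).continuous) hv support_mollify_subset
      (norm_mollify_le hC) (tendsto_mollify hg)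
  have hμν := (hlim (ρ := μ) (continuous_const (y := 1))).sub
    (hlim (ρ := ν) (continuous_const (y := 1)))
  simp only [mul_one] at hμν
  exact tendsto_nhds_unique hμν
    ((hlim hw).congr fun n => (h _ (contDiff_mollify hg n) (hasCompactSupport_mollify hgs n)).symm)

end Mollify

theorem stmt3 (Gp Gm : Measure ℝ)
    [IsFiniteMeasureOnCompacts Gp] [IsFiniteMeasureOnCompacts Gm]
    (h : ∀ f : ℝ → ℝ, ContDiff ℝ (⊤ : ℕ∞) f → HasCompactSupport f →
      MeasureTheory.Integrable (fun z => deriv (deriv f) z) Gp ∧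
      MeasureTheory.Integrable (fun z => deriv (deriv f) z) Gm ∧
      (∫ z, deriv (deriv f) z ∂Gp) = ∫ z, deriv (deriv f) z ∂Gm) :
    ∃ C₁ C₂ : ℝ, ∀ g : ℝ → ℝ, Continuous g → HasCompactSupport g →
      (∫ z, g z ∂Gp) - (∫ z, g z ∂Gm) = ∫ z, g z * (C₁ * z + C₂) := by
  obtain ⟨C₁, C₂, hsmooth⟩ :=
    exists_integral_sub_integral_eq_of_integral_deriv_deriv_eq fun f hf hfs => (h f hf hfs).2.2
  exact ⟨C₁, C₂, fun g => integral_sub_integral_eq_of_forall_contDiff (by fun_prop) hsmooth⟩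

end
end

section
/- Let μ(dx) = (1/2) e^{−|x|} dx be the standard Laplace distribution. Then for every v > 0: −∫_v^∞ (1/2) e^{−|x|} dx + (1/v) ∫₀^v e^{−(v−x)} (1/2) e^{−|x|} dx + (1/v) ∫_v^∞ e^{−(x−v)} (1/2) e^{−|x|} dx − ∫_v^∞ w^{−2} ( ∫₀^w e^{−(w−x)} (1/2) e^{−|x|} dx + ∫_w^∞ e^{−(x−w)} (1/2) e^{−|x|} dx ) dw = −(1/4) ∫_v^∞ e^{−w} / w dw, and this quantity is strictly negative. (Hence the distributional equation (2.3) of Kuznetsov–Pardo–Savov fails for the Laplace distribution, which is the law of the exponential functional ∫₀^∞ e^{−s} dη_s with ν_η(dx) = e^{−|x|} dx.) -/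
/-!
On `[0, ∞)` the Laplace density is `e^{-x}/2`, so all inner integrals are explicit:
`∫₀^w e^{-(w-x)} e^{-x}/2 dx = w e^{-w}/2` and `∫_w^∞ e^{-(x-w)} e^{-x}/2 dx = e^{-w}/4`.
The outer integrand becomes `e^{-w}/(2w) + e^{-w}/(4w²)`, and since `-e^{-w}/w` is an
antiderivative of `e^{-w}/w + e^{-w}/w²`, its integral over `(v, ∞)` equals
`¼ ∫_v^∞ e^{-w}/w dw + e^{-v}/(4v)`. Everything else cancels.
-/

open MeasureTheory Set Filter Real

noncomputable section

lemma integral_Ioi_half_exp_neg_abs {v : ℝ} (hv : 0 ≤ v) :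
    ∫ x in Ioi v, (1 / 2) * exp (-|x|) = exp (-v) / 2 := by
  rw [setIntegral_congr_fun measurableSet_Ioi fun x (hx : v < x) ↦ by
    rw [abs_of_pos (hv.trans_lt hx)], integral_const_mul, integral_exp_neg_Ioi]
  ring

lemma intervalIntegral_exp_neg_sub_mul_half_exp_neg_abs {w : ℝ} (hw : 0 ≤ w) :
    ∫ x in (0 : ℝ)..w, exp (-(w - x)) * ((1 / 2) * exp (-|x|)) = w / 2 * exp (-w) := by
  have hconst : EqOn (fun x ↦ exp (-(w - x)) * ((1 / 2) * exp (-|x|)))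
      (fun _ ↦ (1 / 2) * exp (-w)) (uIcc 0 w) := by
    intro x hx
    rw [uIcc_of_le hw] at hx
    simp only [abs_of_nonneg hx.1, mul_left_comm _ (1 / 2 : ℝ), ← exp_add]
    ring_nf
  rw [intervalIntegral.integral_congr hconst, intervalIntegral.integral_const, smul_eq_mul]
  ring

lemma integral_Ioi_exp_neg_sub_mul_half_exp_neg_abs {w : ℝ} (hw : 0 ≤ w) :
    ∫ x in Ioi w, exp (-(x - w)) * ((1 / 2) * exp (-|x|)) = exp (-w) / 4 := by
  have hrewrite : EqOn (fun x ↦ exp (-(x - w)) * ((1 / 2) * exp (-|x|)))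
      (fun x ↦ exp w / 2 * exp (-2 * x)) (Ioi w) := by
    intro x hx
    simp only [abs_of_pos (hw.trans_lt hx), mul_left_comm _ (1 / 2 : ℝ), ← exp_add]
    rw [show -(x - w) + -x = w + -2 * x by ring, exp_add]
    ring
  rw [setIntegral_congr_fun measurableSet_Ioi hrewrite, integral_const_mul,
    integral_exp_mul_Ioi (by norm_num : (-2 : ℝ) < 0), show -2 * w = -w + -w by ring, exp_add,
    exp_neg w]
  field_simp
  norm_num

lemma integrableOn_Ioi_exp_neg_div_pow {v : ℝ} (hv : 0 < v) (n : ℕ) :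
    IntegrableOn (fun w ↦ exp (-w) / w ^ n) (Ioi v) := by
  refine Integrable.mono' ((integrableOn_exp_neg_Ioi v).div_const (v ^ n))
    (by fun_prop : Measurable fun w : ℝ ↦ exp (-w) / w ^ n).aestronglyMeasurable ?_
  filter_upwards [ae_restrict_mem measurableSet_Ioi] with w (hw : v < w)
  rw [norm_of_nonneg (by have := hv.trans hw; positivity)]
  gcongr

lemma integral_Ioi_exp_neg_div_add_exp_neg_div_sq {v : ℝ} (hv : 0 < v) :
    ∫ w in Ioi v, (exp (-w) / w + exp (-w) / w ^ 2) = exp (-v) / v := by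
  have hderiv : ∀ w ∈ Ici v,
      HasDerivAt (fun w ↦ -(exp (-w) / w)) (exp (-w) / w + exp (-w) / w ^ 2) w := by
    intro w hw
    have hw0 : w ≠ 0 := (hv.trans_le hw).ne'
    refine ((hasDerivAt_neg w).exp.fun_div (hasDerivAt_id' w) hw0).fun_neg.congr_deriv ?_
    field_simp
    ring
  have hlim : Tendsto (fun w ↦ -(exp (-w) / w)) atTop (nhds 0) := by
    simpa [div_eq_mul_inv] using (tendsto_exp_neg_atTop_nhds_zero.mul tendsto_inv_atTop_zero).neg
  have hint : IntegrableOn (fun w ↦ exp (-w) / w + exp (-w) / w ^ 2) (Ioi v) := by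
    simpa using (integrableOn_Ioi_exp_neg_div_pow hv 1).fun_add
      (integrableOn_Ioi_exp_neg_div_pow hv 2)
  rw [integral_Ioi_of_hasDerivAt_of_tendsto' hderiv hint hlim]
  ring

lemma integral_Ioi_exp_neg_div_pos {v : ℝ} (hv : 0 < v) : 0 < ∫ w in Ioi v, exp (-w) / w := by
  have hpos : ∀ w ∈ Ioi v, 0 < exp (-w) / w := fun w hw ↦ by
    have : 0 < w := hv.trans hw; positivity
  rw [setIntegral_pos_iff_support_of_nonneg_ae
    ((ae_restrict_iff' measurableSet_Ioi).2 (.of_forall fun w hw ↦ (hpos w hw).le))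
    (by simpa using integrableOn_Ioi_exp_neg_div_pow hv 1)]
  refine lt_of_lt_of_le ?_ (measure_mono fun w hw ↦ ⟨(hpos w hw).ne', hw⟩)
  simp

lemma integral_Ioi_laplace_potential_div_sq {v : ℝ} (hv : 0 < v) :
    ∫ w in Ioi v,
        ((∫ x in (0 : ℝ)..w, exp (-(w - x)) * ((1 / 2) * exp (-|x|)))
          + ∫ x in Ioi w, exp (-(x - w)) * ((1 / 2) * exp (-|x|))) / w ^ 2
      = (1 / 4) * (∫ w in Ioi v, exp (-w) / w) + exp (-v) / (4 * v) := by
  have hintegrand : EqOn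
      (fun w ↦ ((∫ x in (0 : ℝ)..w, exp (-(w - x)) * ((1 / 2) * exp (-|x|)))
          + ∫ x in Ioi w, exp (-(x - w)) * ((1 / 2) * exp (-|x|))) / w ^ 2)
      (fun w ↦ (1 / 4) * (exp (-w) / w) + (1 / 4) * (exp (-w) / w + exp (-w) / w ^ 2))
      (Ioi v) := by
    intro w (hw : v < w)
    have hw0 : 0 < w := hv.trans hw
    simp only [intervalIntegral_exp_neg_sub_mul_half_exp_neg_abs hw0.le,
      integral_Ioi_exp_neg_sub_mul_half_exp_neg_abs hw0.le]
    field_simp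
    ring
  have hint₁ := integrableOn_Ioi_exp_neg_div_pow hv 1
  have hint₂ := integrableOn_Ioi_exp_neg_div_pow hv 2
  simp only [pow_one] at hint₁
  rw [setIntegral_congr_fun measurableSet_Ioi hintegrand, integral_add (hint₁.const_mul _)
    ((hint₁.fun_add hint₂).const_mul _), integral_const_mul, integral_const_mul,
    integral_Ioi_exp_neg_div_add_exp_neg_div_sq hv]
  ring

theorem stmt14 :
    ∀ v : ℝ, 0 < v →
      ((-(∫ x in Ioi v, (1 / 2) * Real.exp (-|x|))
          + (1 / v) * (∫ x in (0 : ℝ)..v, Real.exp (-(v - x)) * ((1 / 2) * Real.exp (-|x|)))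
          + (1 / v) * (∫ x in Ioi v, Real.exp (-(x - v)) * ((1 / 2) * Real.exp (-|x|)))
          - ∫ w in Ioi v,
              ((∫ x in (0 : ℝ)..w, Real.exp (-(w - x)) * ((1 / 2) * Real.exp (-|x|)))
                + ∫ x in Ioi w, Real.exp (-(x - w)) * ((1 / 2) * Real.exp (-|x|))) / w ^ 2)
        = -(1 / 4) * ∫ w in Ioi v, Real.exp (-w) / w) ∧
      -(1 / 4) * (∫ w in Ioi v, Real.exp (-w) / w) < 0 := by
  intro v hv
  refine ⟨?_, by linarith [integral_Ioi_exp_neg_div_pos hv]⟩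
  rw [integral_Ioi_laplace_potential_div_sq hv, integral_Ioi_half_exp_neg_abs hv.le,
    intervalIntegral_exp_neg_sub_mul_half_exp_neg_abs hv.le,
    integral_Ioi_exp_neg_sub_mul_half_exp_neg_abs hv.le]
  field_simp
  ring

end
end
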